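/- arXiv:2508.02005 — 8 statements merged into one kernel-verified Lean document; each statement's English description precedes it below -/
import Mathlib

section
/- Let k₂, k₃ be nonnegative integers and set A = 5 + k₂ + k₃. If (x, y, z) is a triple of positive integers satisfying x⁴ + k₃x²y + k₂x²z + y² + z² + 2yz = A·x²yz and y = z, then (x, y, z) = (1, 1, 1) or (x, y, z) = (2, 1, 1). -/
lemma stmt_9_aux (U V : ℕ) (h5 : 5 ≤ V) (h8 : V ≤ 8) (h7 : U ≤ 7)
    (h : U ^ 2 + 16 = V ^ 2) : V = 5 := by
  interval_cases V <;> interval_cases U <;> omega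

/-- Let `k₂, k₃` be nonnegative integers and `A = 5 + k₂ + k₃`.  If
`(x, y, z)` is a triple of positive integers with
`x⁴ + k₃x²y + k₂x²z + y² + z² + 2yz = A·x²yz` and `y = z`, then
`(x, y, z) = (1, 1, 1)` or `(x, y, z) = (2, 1, 1)`. -/
theorem stmt_9 (k₂ k₃ x y z : ℕ) (hx : 0 < x) (hy : 0 < y) (hz : 0 < z)
    (h : x ^ 4 + k₃ * x ^ 2 * y + k₂ * x ^ 2 * z + y ^ 2 + z ^ 2 + 2 * y * z =
      (5 + k₂ + k₃) * x ^ 2 * y * z)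
    (hyz : y = z) :
    (x = 1 ∧ y = 1 ∧ z = 1) ∨ (x = 2 ∧ y = 1 ∧ z = 1) := by
  subst hyz
  obtain ⟨m, rfl⟩ : ∃ m, y = m + 1 := ⟨y - 1, by omega⟩
  have h' : (x:ℤ)^4 + (k₃:ℤ)*(x:ℤ)^2*((m:ℤ)+1) + (k₂:ℤ)*(x:ℤ)^2*((m:ℤ)+1)
      + ((m:ℤ)+1)^2 + ((m:ℤ)+1)^2 + 2*((m:ℤ)+1)*((m:ℤ)+1)
      = (5+(k₂:ℤ)+(k₃:ℤ))*(x:ℤ)^2*((m:ℤ)+1)*((m:ℤ)+1) := by exact_mod_cast h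
  obtain ⟨v, hv⟩ : ∃ v : ℤ, v = 5*((m:ℤ)+1) + ((k₂:ℤ)+(k₃:ℤ))*(m:ℤ) := ⟨_, rfl⟩
  have hK0 : (0:ℤ) ≤ (k₂:ℤ)+(k₃:ℤ) := by positivity
  have hm0 : (0:ℤ) ≤ (m:ℤ) := by positivity
  have hKm : (0:ℤ) ≤ ((k₂:ℤ)+(k₃:ℤ)) * (m:ℤ) := mul_nonneg hK0 hm0
  have hv5 : 5 ≤ v := by rw [hv]; linarith
  have hE : (x:ℤ)^4 + 4*((m:ℤ)+1)^2 = v*((m:ℤ)+1)*(x:ℤ)^2 := by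
    rw [hv]; linear_combination h'
  have hsq : (2*(x:ℤ)^2 - v*((m:ℤ)+1))^2 = (v^2-16)*((m:ℤ)+1)^2 := by
    linear_combination (4:ℤ) * hE
  have hm1 : ((m:ℤ)+1) ≠ 0 := by positivity
  have hdvd : ((m:ℤ)+1) ∣ (2*(x:ℤ)^2 - v*((m:ℤ)+1)) := by
    have h2 : ((m:ℤ)+1)^2 ∣ (2*(x:ℤ)^2 - v*((m:ℤ)+1))^2 :=
      ⟨v^2-16, by linarith [hsq]⟩
    exact (Int.pow_dvd_pow_iff (two_ne_zero)).mp h2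
  obtain ⟨s, hs⟩ := hdvd
  have key : ((m:ℤ)+1)^2 * s^2 = ((m:ℤ)+1)^2 * (v^2-16) := by
    rw [hs] at hsq; linear_combination hsq
  have hs2 : s^2 = v^2 - 16 := mul_left_cancel₀ (pow_ne_zero 2 hm1) key
  -- pass to natural numbers
  set U : ℕ := s.natAbs with hU
  set V : ℕ := v.toNat with hVdef
  have hVv : (V:ℤ) = v := Int.toNat_of_nonneg (by linarith)
  have hUs : (U:ℤ)^2 = s^2 := by rw [hU]; push_cast; exact sq_abs s
  have hUV : U^2 + 16 = V^2 := by
    have : (U:ℤ)^2 + 16 = (V:ℤ)^2 := by rw [hUs, hVv]; linarith [hs2]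
    exact_mod_cast this
  have hV5 : 5 ≤ V := by
    have : (5:ℤ) ≤ (V:ℤ) := by rw [hVv]; exact hv5
    exact_mod_cast this
  -- bound U and V
  have hUltV : U < V := by
    by_contra hc
    push_neg at hc
    have := Nat.pow_le_pow_left hc 2
    linarith
  have hU7 : U ≤ 7 := by
    have h1 : (U+1)^2 ≤ V^2 := Nat.pow_le_pow_left hUltV 2
    nlinarith
  have hV8 : V ≤ 8 := by
    by_contra hc
    push_neg at hc
    have h9 : (9:ℕ) ≤ V := hc
    have h1 : (9:ℕ)^2 ≤ V^2 := Nat.pow_le_pow_left h9 2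
    have h2 : U^2 ≤ 7^2 := Nat.pow_le_pow_left hU7 2
    norm_num at h1 h2
    omega
  have hVeq : V = 5 := stmt_9_aux U V hV5 hV8 hU7 hUV
  have hveq : v = 5 := by rw [← hVv, hVeq]; norm_num
  have hmz : m = 0 := by
    rw [hveq] at hv
    have : (m:ℤ) = 0 := by linarith
    exact_mod_cast this
  subst hmz
  rw [hveq] at hE
  norm_num at hE
  have hx1 : (1:ℤ) ≤ (x:ℤ)^2 := by
    have : (1:ℕ) ≤ x^2 := Nat.one_le_iff_ne_zero.mpr (by positivity)
    exact_mod_cast this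
  have hx4 : (x:ℤ)^2 ≤ 4 := by nlinarith
  have hx2 : x ≤ 2 := by
    by_contra hc
    push_neg at hc
    have h3 : (3:ℕ) ≤ x := hc
    have : (3:ℕ)^2 ≤ x^2 := Nat.pow_le_pow_left h3 2
    have : (9:ℤ) ≤ (x:ℤ)^2 := by exact_mod_cast this
    linarith
  interval_cases x
  · left; norm_num
  · right; norm_num
end

section
/- Let k₁, k₂ ≥ 0 be integers and A = 7 + 3k₁ + k₂. Suppose (x, y, z) is a positive integer solution of x² + y⁴ + z⁴ + 2x(y² + z²) + k₁yz(x + y² + z²) + k₂y²z² = A·xy²z² with x, y², z² pairwise distinct and x = max(x, y², z²). Set x' = (y⁴ + k₁y³z + k₂y²z² + k₁yz³ + z⁴)/x. Then x' is a positive integer, (x', y, z) is also a solution, and max(x', y², z²) < max(x, y², z²), i.e. x' ≤ max(y², z²) < x. -/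
lemma key_aux_stmt10 (k₁ k₂ y z : ℤ) (hk₁ : 0 ≤ k₁) (hk₂ : 0 ≤ k₂)
    (hy : 0 < y) (hz : 0 < z) (hw : y ^ 2 ≤ z ^ 2) :
    4 * z ^ 4 + 2 * y ^ 2 * z ^ 2 + 2 * k₁ * y * z ^ 3 + y ^ 4 + k₁ * y ^ 3 * z +
      k₂ * y ^ 2 * z ^ 2 ≤ (7 + 3 * k₁ + k₂) * y ^ 2 * z ^ 4 := by
  have hy1 : (1 : ℤ) ≤ y := hy
  have hz1 : (1 : ℤ) ≤ z := hz
  have hy2 : (1 : ℤ) ≤ y ^ 2 := by nlinarith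
  have hz2 : (1 : ℤ) ≤ z ^ 2 := by nlinarith
  have hyz : y ≤ z := by nlinarith
  have hz24 : z ^ 2 ≤ z ^ 4 := by nlinarith
  have hyz1 : (1 : ℤ) ≤ y * z := by nlinarith
  have h1 : 4 * z ^ 4 ≤ 4 * z ^ 4 * y ^ 2 := by nlinarith [pow_pos hz 4]
  have h2 : 2 * y ^ 2 * z ^ 2 ≤ 2 * y ^ 2 * z ^ 4 := by nlinarith [pow_pos hy 2]
  have h3 : y ^ 4 ≤ y ^ 2 * z ^ 4 := by nlinarith [pow_pos hy 2]
  have h4 : 2 * k₁ * y * z ^ 3 ≤ 2 * k₁ * y ^ 2 * z ^ 4 := by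
    have : (0:ℤ) ≤ 2 * k₁ * (y * z ^ 3) * (y * z - 1) :=
      mul_nonneg (by positivity) (by linarith)
    nlinarith [this]
  have h5 : k₁ * y ^ 3 * z ≤ k₁ * y ^ 2 * z ^ 4 := by
    have hy3 : y ≤ z ^ 3 := by nlinarith
    have : (0:ℤ) ≤ k₁ * (y ^ 2 * z) * (z ^ 3 - y) :=
      mul_nonneg (by positivity) (by linarith)
    nlinarith [this]
  have h6 : k₂ * y ^ 2 * z ^ 2 ≤ k₂ * y ^ 2 * z ^ 4 := by
    have : (0:ℤ) ≤ k₂ * y ^ 2 * (z ^ 4 - z ^ 2) :=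
      mul_nonneg (by positivity) (by linarith)
    nlinarith [this]
  nlinarith [h1, h2, h3, h4, h5, h6]

/-- Descent step for the Markov-cluster equation of the seed `Ω_{3,7}`.
If `(x, y, z)` is a positive integer solution of
`x² + y⁴ + z⁴ + 2x(y²+z²) + k₁yz(x+y²+z²) + k₂y²z² = (7+3k₁+k₂)xy²z²` with `x, y², z²`
pairwise distinct and `x` maximal among them, then
`x' = (y⁴ + k₁y³z + k₂y²z² + k₁yz³ + z⁴)/x` is a positive integer, `(x', y, z)` is also
a solution, and `x' ≤ max(y², z²) < x`. -/
theorem stmt_10 (k₁ k₂ : ℤ) (hk₁ : 0 ≤ k₁) (hk₂ : 0 ≤ k₂) (x y z x' : ℤ)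
    (hx : 0 < x) (hy : 0 < y) (hz : 0 < z)
    (heq : x ^ 2 + y ^ 4 + z ^ 4 + 2 * x * (y ^ 2 + z ^ 2) +
        k₁ * y * z * (x + y ^ 2 + z ^ 2) + k₂ * y ^ 2 * z ^ 2 =
      (7 + 3 * k₁ + k₂) * x * y ^ 2 * z ^ 2)
    (hxy : x ≠ y ^ 2) (hxz : x ≠ z ^ 2) (hyz : y ^ 2 ≠ z ^ 2)
    (hmax₁ : y ^ 2 ≤ x) (hmax₂ : z ^ 2 ≤ x)
    (hx' : x' = (y ^ 4 + k₁ * y ^ 3 * z + k₂ * y ^ 2 * z ^ 2 + k₁ * y * z ^ 3 + z ^ 4) / x) :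
    x ∣ (y ^ 4 + k₁ * y ^ 3 * z + k₂ * y ^ 2 * z ^ 2 + k₁ * y * z ^ 3 + z ^ 4) ∧
    0 < x' ∧
    x' ^ 2 + y ^ 4 + z ^ 4 + 2 * x' * (y ^ 2 + z ^ 2) +
        k₁ * y * z * (x' + y ^ 2 + z ^ 2) + k₂ * y ^ 2 * z ^ 2 =
      (7 + 3 * k₁ + k₂) * x' * y ^ 2 * z ^ 2 ∧
    x' ≤ max (y ^ 2) (z ^ 2) ∧ max (y ^ 2) (z ^ 2) < x := by
  have hdvd : x ∣ (y ^ 4 + k₁ * y ^ 3 * z + k₂ * y ^ 2 * z ^ 2 + k₁ * y * z ^ 3 + z ^ 4) :=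
    ⟨(7 + 3 * k₁ + k₂) * y ^ 2 * z ^ 2 - 2 * (y ^ 2 + z ^ 2) - k₁ * y * z - x,
      by linear_combination heq⟩
  have hxx' : x * x' = y ^ 4 + k₁ * y ^ 3 * z + k₂ * y ^ 2 * z ^ 2 + k₁ * y * z ^ 3 + z ^ 4 := by
    rw [hx']; exact Int.mul_ediv_cancel' hdvd
  have hNpos : 0 < y ^ 4 + k₁ * y ^ 3 * z + k₂ * y ^ 2 * z ^ 2 + k₁ * y * z ^ 3 + z ^ 4 := by
    positivity
  have hx'pos : 0 < x' := by
    rcases mul_pos_iff.mp (hxx' ▸ hNpos) with ⟨_, h⟩ | ⟨h, _⟩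
    · exact h
    · linarith
  have hsum : x + x' = (7 + 3 * k₁ + k₂) * y ^ 2 * z ^ 2 - 2 * (y ^ 2 + z ^ 2) - k₁ * y * z := by
    refine mul_left_cancel₀ (ne_of_gt hx) ?_
    linear_combination heq + hxx'
  have heq' : x' ^ 2 + y ^ 4 + z ^ 4 + 2 * x' * (y ^ 2 + z ^ 2) +
        k₁ * y * z * (x' + y ^ 2 + z ^ 2) + k₂ * y ^ 2 * z ^ 2 =
      (7 + 3 * k₁ + k₂) * x' * y ^ 2 * z ^ 2 := by
    linear_combination x' * hsum - hxx'
  have hylt : y ^ 2 < x := lt_of_le_of_ne hmax₁ (Ne.symm hxy)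
  have hzlt : z ^ 2 < x := lt_of_le_of_ne hmax₂ (Ne.symm hxz)
  refine ⟨hdvd, hx'pos, heq', ?_, max_lt hylt hzlt⟩
  rcases le_total (y ^ 2) (z ^ 2) with hw | hw
  · -- w = z², show x' ≤ z²
    have key := key_aux_stmt10 k₁ k₂ y z hk₁ hk₂ hy hz hw
    have hf : (z ^ 2 - x) * (z ^ 2 - x') ≤ 0 := by
      linear_combination key - z ^ 2 * hsum + hxx'
    have hx'le : x' ≤ z ^ 2 := by
      by_contra h
      push_neg at h
      nlinarith [mul_pos (sub_pos.2 hzlt) (sub_pos.2 h)]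
    exact hx'le.trans (le_max_right _ _)
  · -- w = y², show x' ≤ y²
    have key := key_aux_stmt10 k₁ k₂ z y hk₁ hk₂ hz hy hw
    have hf : (y ^ 2 - x) * (y ^ 2 - x') ≤ 0 := by
      linear_combination key - y ^ 2 * hsum + hxx'
    have hx'le : x' ≤ y ^ 2 := by
      by_contra h
      push_neg at h
      nlinarith [mul_pos (sub_pos.2 hylt) (sub_pos.2 h)]
    exact hx'le.trans (le_max_left _ _)
end

section
/- Let k₂, k₃ ≥ 0 be integers and A = 5 + k₂ + k₃. Suppose (x, y, z) is a positive integer solution of x⁴ + k₃x²y + k₂x²z + y² + z² + 2yz = A·x²yz with x², y, z pairwise distinct and x² = max(x², y, z). Set x' = (y + z)/x. Then x' is a positive integer (i.e., x divides y + z), (x', y, z) is a solution of the same equation, and (x')² ≤ max(y, z) < x². -/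
set_option maxHeartbeats 1000000


/-- Descent step for the equation of the seed `Ω_{3,10}`.
If `(x, y, z)` is a positive integer solution of
`x⁴ + k₃x²y + k₂x²z + y² + z² + 2yz = (5+k₂+k₃)x²yz` with `x², y, z` pairwise distinct
and `x²` maximal among them, then `x` divides `y + z`, `x' = (y+z)/x` is a positive
integer, `(x', y, z)` is a solution of the same equation, and `(x')² ≤ max(y,z) < x²`. -/
theorem stmt_11 (k₂ k₃ : ℤ) (hk₂ : 0 ≤ k₂) (hk₃ : 0 ≤ k₃) (x y z x' : ℤ)
    (hx : 0 < x) (hy : 0 < y) (hz : 0 < z)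
    (heq : x ^ 4 + k₃ * x ^ 2 * y + k₂ * x ^ 2 * z + y ^ 2 + z ^ 2 + 2 * y * z =
      (5 + k₂ + k₃) * x ^ 2 * y * z)
    (hxy : x ^ 2 ≠ y) (hxz : x ^ 2 ≠ z) (hyz : y ≠ z)
    (hmax₁ : y ≤ x ^ 2) (hmax₂ : z ≤ x ^ 2)
    (hx' : x' = (y + z) / x) :
    x ∣ (y + z) ∧
    0 < x' ∧
    x' ^ 4 + k₃ * x' ^ 2 * y + k₂ * x' ^ 2 * z + y ^ 2 + z ^ 2 + 2 * y * z =
      (5 + k₂ + k₃) * x' ^ 2 * y * z ∧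
    x' ^ 2 ≤ max y z ∧ max y z < x ^ 2 := by
  have hxne : x ≠ 0 := hx.ne'
  have hdvd2 : x ^ 2 ∣ (y + z) ^ 2 :=
    ⟨(5 + k₂ + k₃) * y * z - x ^ 2 - k₃ * y - k₂ * z, by linear_combination heq⟩
  have hdvd : x ∣ y + z := (Int.pow_dvd_pow_iff two_ne_zero).mp hdvd2
  obtain ⟨c, hc⟩ := hdvd
  have hx'c : x' = c := by rw [hx', hc, Int.mul_ediv_cancel_left _ hxne]
  have hxx' : x * x' = y + z := by rw [hx'c, ← hc]
  have hx'pos : 0 < x' := by nlinarith [hxx']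
  have key : x' ^ 2 * x ^ 2 = (y + z) ^ 2 := by rw [← hxx']; ring
  have h1 : x ^ 2 * (x ^ 2 + x' ^ 2) =
      x ^ 2 * ((5 + k₂ + k₃) * y * z - k₃ * y - k₂ * z) := by
    linear_combination heq + key
  have hsum : x ^ 2 + x' ^ 2 = (5 + k₂ + k₃) * y * z - k₃ * y - k₂ * z :=
    mul_left_cancel₀ (pow_ne_zero 2 hxne) h1
  refine ⟨⟨x', hxx'.symm⟩, hx'pos, by linear_combination x' ^ 2 * hsum - key, ?_, ?_⟩
  · -- x'^2 ≤ max y z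
    have hneg : (max y z - x ^ 2) * (max y z - x' ^ 2) < 0 := by
      rcases max_cases y z with ⟨hm, hle⟩ | ⟨hm, hle⟩ <;> rw [hm]
      · have hzy : z + 1 ≤ y := by omega
        have e : (y - x ^ 2) * (y - x' ^ 2) =
            y ^ 2 - ((5 + k₂ + k₃) * y * z - k₃ * y - k₂ * z) * y + (y + z) ^ 2 := by
          linear_combination (-y) * hsum + key
        rw [e]
        nlinarith [mul_nonneg (mul_nonneg hk₂ hy.le) (by nlinarith : (0:ℤ) ≤ y * z - z),
          mul_nonneg (mul_nonneg hk₃ hy.le) (by nlinarith : (0:ℤ) ≤ y * z - y),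
          mul_nonneg (by omega : (0:ℤ) ≤ y - z - 1) (by omega : (0:ℤ) ≤ 3 * y + z - 1),
          mul_nonneg (sq_nonneg y) (by omega : (0:ℤ) ≤ z - 1)]
      · have hzy : y + 1 ≤ z := by omega
        have e : (z - x ^ 2) * (z - x' ^ 2) =
            z ^ 2 - ((5 + k₂ + k₃) * y * z - k₃ * y - k₂ * z) * z + (y + z) ^ 2 := by
          linear_combination (-z) * hsum + key
        rw [e]
        nlinarith [mul_nonneg (mul_nonneg hk₂ hz.le) (by nlinarith : (0:ℤ) ≤ y * z - z),
          mul_nonneg (mul_nonneg hk₃ hz.le) (by nlinarith : (0:ℤ) ≤ y * z - y),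
          mul_nonneg (by omega : (0:ℤ) ≤ z - y - 1) (by omega : (0:ℤ) ≤ 3 * z + y - 1),
          mul_nonneg (sq_nonneg z) (by omega : (0:ℤ) ≤ y - 1)]
    have hlt : max y z < x ^ 2 := by
      rcases max_cases y z with ⟨hm, _⟩ | ⟨hm, _⟩ <;> rw [hm]
      · exact lt_of_le_of_ne hmax₁ hxy.symm
      · exact lt_of_le_of_ne hmax₂ hxz.symm
    by_contra h
    push_neg at h
    nlinarith [mul_nonneg (by linarith : (0:ℤ) ≤ x' ^ 2 - max y z)
      (by linarith : (0:ℤ) ≤ x ^ 2 - max y z)]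
  · rcases max_cases y z with ⟨hm, _⟩ | ⟨hm, _⟩ <;> rw [hm]
    · exact lt_of_le_of_ne hmax₁ hxy.symm
    · exact lt_of_le_of_ne hmax₂ hxz.symm
end

section
/- For nonnegative integers k₂, k₃, the set of positive integer solutions of X⁴ + k₃X²Y + k₂X²Z + Y² + Z² + 2YZ = (5 + k₂ + k₃)X²YZ is exactly the orbit of (1,1,1) under the group generated by the three maps μ₁(X,Y,Z) = ((Y+Z)/X, Y, Z), μ₂(X,Y,Z) = (X, (X⁴ + k₂X²Z + Z²)/Y, Z), μ₃(X,Y,Z) = (X, Y, (X⁴ + k₃X²Y + Y²)/Z). -/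
section markovHelpers₁₀

private lemma markov₁₀_descentAux (k2 k3 t b c : ℤ) (hk2 : 0 ≤ k2) (hk3 : 0 ≤ k3)
    (ht : 1 ≤ t) (hb : 1 ≤ b) (hc : 1 ≤ c) (hcb : c ≤ b)
    (h1 : t ≤ b + c)
    (h2 : b^2 ≤ t^2 + k2*t*c + c^2)
    (hE : t^2 + k3*t*b + k2*t*c + (b+c)^2 = (5+k2+k3)*t*b*c) :
    t = 1 ∧ b = 1 ∧ c = 1 := by
  rcases (by omega : c = 1 ∨ 2 ≤ c) with rfl | hc2
  · rcases (by omega : b = 1 ∨ 2 ≤ b) with rfl | hb2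
    · have h4 : t ≤ 2 := by linarith
      interval_cases t
      · exact ⟨rfl, rfl, rfl⟩
      · exfalso; nlinarith
    · exfalso
      have ht1 : t = 1 := by
        by_contra h
        have ht2 : 2 ≤ t := by omega
        nlinarith [mul_nonneg (mul_nonneg hk2 (by linarith : (0:ℤ) ≤ t)) (by linarith : (0:ℤ) ≤ b - 2),
          mul_nonneg (by linarith : (0:ℤ) ≤ t) (by linarith : (0:ℤ) ≤ b + 1 - t),
          mul_nonneg (by linarith : (0:ℤ) ≤ t - 2) (by linarith : (0:ℤ) ≤ b - 2),
          mul_nonneg (by linarith : (0:ℤ) ≤ b) (by linarith : (0:ℤ) ≤ t - 2),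
          mul_nonneg (by linarith : (0:ℤ) ≤ t) (by linarith : (0:ℤ) ≤ b - 2)]
      subst ht1
      nlinarith [mul_nonneg (by linarith : (0:ℤ) ≤ b - 1) (by linarith : (0:ℤ) ≤ k2 + 2 - b^2),
        mul_pos (by linarith : (0:ℤ) < b) (pow_pos (by linarith : (0:ℤ) < b - 1) 2),
        sq_nonneg (b-1)]
  · exfalso
    have hb2 : 2 ≤ b := le_trans hc2 hcb
    have ht1 : t = 1 := by
      by_contra h
      have ht2 : 2 ≤ t := by omega
      nlinarith [mul_nonneg (mul_nonneg (mul_nonneg hk2 (by linarith : (0:ℤ) ≤ t)) (by linarith : (0:ℤ) ≤ c)) (by linarith : (0:ℤ) ≤ b - 2),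
        mul_nonneg (mul_nonneg (mul_nonneg hk3 (by linarith : (0:ℤ) ≤ t)) (by linarith : (0:ℤ) ≤ b)) (by linarith : (0:ℤ) ≤ c - 1),
        mul_nonneg (by linarith : (0:ℤ) ≤ t) (by linarith : (0:ℤ) ≤ b + c - t),
        mul_nonneg (by linarith : (0:ℤ) ≤ c) (by linarith : (0:ℤ) ≤ b - c),
        mul_nonneg (mul_nonneg (by linarith : (0:ℤ) ≤ t) (by linarith : (0:ℤ) ≤ b)) (by linarith : (0:ℤ) ≤ c - 2),
        mul_nonneg (mul_nonneg (by linarith : (0:ℤ) ≤ t) (by linarith : (0:ℤ) ≤ c)) (by linarith : (0:ℤ) ≤ b - 2),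
        mul_nonneg (mul_nonneg (by linarith : (0:ℤ) ≤ b) (by linarith : (0:ℤ) ≤ c)) (by linarith : (0:ℤ) ≤ t - 2),
        mul_pos (mul_pos (by linarith : (0:ℤ) < t) (by linarith : (0:ℤ) < b)) (by linarith : (0:ℤ) < c)]
    subst ht1
    nlinarith [mul_nonneg (mul_nonneg hk2 (by linarith : (0:ℤ) ≤ c)) (by linarith : (0:ℤ) ≤ b - 2),
      mul_nonneg (mul_nonneg hk3 (by linarith : (0:ℤ) ≤ b)) (by linarith : (0:ℤ) ≤ c - 1),
      mul_nonneg (by linarith : (0:ℤ) ≤ c) (by linarith : (0:ℤ) ≤ b - c),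
      mul_nonneg (by linarith : (0:ℤ) ≤ b - 2) (by linarith : (0:ℤ) ≤ c - 2)]

private lemma markov₁₀_descent (k2 k3 t b c : ℤ) (hk2 : 0 ≤ k2) (hk3 : 0 ≤ k3)
    (ht : 1 ≤ t) (hb : 1 ≤ b) (hc : 1 ≤ c)
    (h1 : t ≤ b + c)
    (h2 : b^2 ≤ t^2 + k2*t*c + c^2)
    (h3 : c^2 ≤ t^2 + k3*t*b + b^2)
    (hE : t^2 + k3*t*b + k2*t*c + (b+c)^2 = (5+k2+k3)*t*b*c) :
    t = 1 ∧ b = 1 ∧ c = 1 := by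
  rcases le_total c b with hcb | hbc
  · exact markov₁₀_descentAux k2 k3 t b c hk2 hk3 ht hb hc hcb h1 h2 hE
  · obtain ⟨h1', h2', h3'⟩ := markov₁₀_descentAux k3 k2 t c b hk3 hk2 ht hc hb hbc
      (by linarith) (by linarith) (by linear_combination hE)
    exact ⟨h1', h3', h2'⟩

variable {K2 K3 : ℤ}

private lemma markov₁₀_mu1_step (a b c : ℤ) (ha : 0 < a) (hb : 0 < b) (hc : 0 < c)
    (heq : a ^ 4 + K3 * a ^ 2 * b + K2 * a ^ 2 * c + b ^ 2 + c ^ 2 + 2 * b * c =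
      (5 + K2 + K3) * a ^ 2 * b * c) :
    ∃ a' : ℤ, 0 < a' ∧ b + c = a * a' ∧
      a' ^ 4 + K3 * a' ^ 2 * b + K2 * a' ^ 2 * c + b ^ 2 + c ^ 2 + 2 * b * c =
        (5 + K2 + K3) * a' ^ 2 * b * c := by
  have hdvd : a ∣ b + c := by
    have h2 : a ^ 2 ∣ (b + c) ^ 2 :=
      ⟨(5 + K2 + K3) * b * c - K3 * b - K2 * c - a ^ 2, by linear_combination heq⟩
    exact (Int.pow_dvd_pow_iff two_ne_zero).mp h2
  obtain ⟨a', hprod⟩ := hdvd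
  have ha' : 0 < a' := by nlinarith [hprod]
  refine ⟨a', ha', hprod, ?_⟩
  have hq : a' ^ 2 = (5 + K2 + K3) * b * c - K3 * b - K2 * c - a ^ 2 := by
    have key : a ^ 2 * a' ^ 2 = a ^ 2 * ((5 + K2 + K3) * b * c - K3 * b - K2 * c - a ^ 2) := by
      linear_combination heq - (b + c + a * a') * hprod
    exact mul_left_cancel₀ (pow_ne_zero 2 ha.ne') key
  linear_combination (a' ^ 2 - a ^ 2) * hq + heq

private lemma markov₁₀_mu2_step (a b c : ℤ) (hk2 : 0 ≤ K2) (ha : 0 < a) (hb : 0 < b) (hc : 0 < c)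
    (heq : a ^ 4 + K3 * a ^ 2 * b + K2 * a ^ 2 * c + b ^ 2 + c ^ 2 + 2 * b * c =
      (5 + K2 + K3) * a ^ 2 * b * c) :
    ∃ b' : ℤ, 0 < b' ∧ b * b' = a ^ 4 + K2 * a ^ 2 * c + c ^ 2 ∧
      a ^ 4 + K3 * a ^ 2 * b' + K2 * a ^ 2 * c + b' ^ 2 + c ^ 2 + 2 * b' * c =
        (5 + K2 + K3) * a ^ 2 * b' * c := by
  refine ⟨(5 + K2 + K3) * a ^ 2 * c - K3 * a ^ 2 - 2 * c - b, ?_, ?_, ?_⟩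
  · nlinarith [pow_pos ha 4, pow_pos ha 2, mul_nonneg (mul_nonneg hk2 (pow_pos ha 2).le) hc.le,
      pow_pos hc 2]
  · linear_combination -heq
  · linear_combination heq

private lemma markov₁₀_mu3_step (a b c : ℤ) (hk3 : 0 ≤ K3) (ha : 0 < a) (hb : 0 < b) (hc : 0 < c)
    (heq : a ^ 4 + K3 * a ^ 2 * b + K2 * a ^ 2 * c + b ^ 2 + c ^ 2 + 2 * b * c =
      (5 + K2 + K3) * a ^ 2 * b * c) :
    ∃ c' : ℤ, 0 < c' ∧ c * c' = a ^ 4 + K3 * a ^ 2 * b + b ^ 2 ∧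
      a ^ 4 + K3 * a ^ 2 * b + K2 * a ^ 2 * c' + b ^ 2 + c' ^ 2 + 2 * b * c' =
        (5 + K2 + K3) * a ^ 2 * b * c' := by
  obtain ⟨c', h1, h2, h3⟩ := markov₁₀_mu2_step (K2 := K3) (K3 := K2) a c b hk3 ha hc hb
    (by linear_combination heq)
  exact ⟨c', h1, h2, by linear_combination h3⟩

end markovHelpers₁₀

/-- The orbit of `(1,1,1)` under the group generated by the three mutation maps
`μ₁(X,Y,Z) = ((Y+Z)/X, Y, Z)`, `μ₂(X,Y,Z) = (X, (X⁴+k₂X²Z+Z²)/Y, Z)`,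
`μ₃(X,Y,Z) = (X, Y, (X⁴+k₃X²Y+Y²)/Z)` on positive rational triples: the smallest set
containing `(1,1,1)` and closed under `μ₁, μ₂, μ₃` (the maps are involutions on the
solution set, so this closure is the group orbit). -/
inductive markovClusterOrbit₁₀ (k₂ k₃ : ℕ) : ℚ → ℚ → ℚ → Prop
  | base : markovClusterOrbit₁₀ k₂ k₃ 1 1 1
  | mu1 {x y z : ℚ} : markovClusterOrbit₁₀ k₂ k₃ x y z →
      markovClusterOrbit₁₀ k₂ k₃ ((y + z) / x) y z
  | mu2 {x y z : ℚ} : markovClusterOrbit₁₀ k₂ k₃ x y z →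
      markovClusterOrbit₁₀ k₂ k₃ x ((x ^ 4 + k₂ * x ^ 2 * z + z ^ 2) / y) z
  | mu3 {x y z : ℚ} : markovClusterOrbit₁₀ k₂ k₃ x y z →
      markovClusterOrbit₁₀ k₂ k₃ x y ((x ^ 4 + k₃ * x ^ 2 * y + y ^ 2) / z)

private lemma markov₁₀_bwd (k₂ k₃ : ℕ) : ∀ n : ℕ, ∀ a b c : ℤ, 0 < a → 0 < b → 0 < c →
    a + b + c ≤ (n : ℤ) →
    a ^ 4 + (k₃ : ℤ) * a ^ 2 * b + (k₂ : ℤ) * a ^ 2 * c + b ^ 2 + c ^ 2 + 2 * b * c =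
      (5 + (k₂ : ℤ) + (k₃ : ℤ)) * a ^ 2 * b * c →
    markovClusterOrbit₁₀ k₂ k₃ (a : ℚ) (b : ℚ) (c : ℚ) := by
  intro n
  induction n with
  | zero => intro a b c ha hb hc hn _; exfalso; push_cast at hn; omega
  | succ n ih =>
    intro a b c ha hb hc hn heq
    by_cases hA : b + c < a ^ 2
    · obtain ⟨a', ha', hprod, heq'⟩ := markov₁₀_mu1_step a b c ha hb hc heq
      have haa : a' < a := by nlinarith [hprod]
      have horb := ih a' b c ha' hb hc (by push_cast at hn ⊢; omega) heq'
      have key : ((b : ℚ) + (c : ℚ)) / (a' : ℚ) = (a : ℚ) := by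
        rw [div_eq_iff (by exact_mod_cast ha'.ne' : (a' : ℚ) ≠ 0)]
        exact_mod_cast hprod
      have := horb.mu1
      rwa [key] at this
    · by_cases hB : a ^ 4 + (k₂ : ℤ) * a ^ 2 * c + c ^ 2 < b ^ 2
      · obtain ⟨b', hb', hprod, heq'⟩ := markov₁₀_mu2_step a b c (by positivity) ha hb hc heq
        have hbb : b' < b := by nlinarith [hprod]
        have horb := ih a b' c ha hb' hc (by push_cast at hn ⊢; omega) heq'
        have key : ((a : ℚ) ^ 4 + (k₂ : ℚ) * (a : ℚ) ^ 2 * (c : ℚ) + (c : ℚ) ^ 2) / (b' : ℚ)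
            = (b : ℚ) := by
          rw [div_eq_iff (by exact_mod_cast hb'.ne' : (b' : ℚ) ≠ 0)]
          exact_mod_cast hprod.symm
        have := horb.mu2
        rwa [key] at this
      · by_cases hC : a ^ 4 + (k₃ : ℤ) * a ^ 2 * b + b ^ 2 < c ^ 2
        · obtain ⟨c', hc', hprod, heq'⟩ := markov₁₀_mu3_step a b c (by positivity) ha hb hc heq
          have hcc : c' < c := by nlinarith [hprod]
          have horb := ih a b c' ha hb hc' (by push_cast at hn ⊢; omega) heq'
          have key : ((a : ℚ) ^ 4 + (k₃ : ℚ) * (a : ℚ) ^ 2 * (b : ℚ) + (b : ℚ) ^ 2) / (c' : ℚ)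
              = (c : ℚ) := by
            rw [div_eq_iff (by exact_mod_cast hc'.ne' : (c' : ℚ) ≠ 0)]
            exact_mod_cast hprod.symm
          have := horb.mu3
          rwa [key] at this
        · push_neg at hA hB hC
          obtain ⟨h1, h2, h3⟩ := markov₁₀_descent (k₂ : ℤ) (k₃ : ℤ) (a ^ 2) b c
            (by positivity) (by positivity) (by nlinarith) hb hc hA
            (by nlinarith) (by nlinarith) (by linear_combination heq)
          have ha1 : a = 1 := by nlinarith
          subst ha1; subst h2; subst h3
          norm_num
          exact markovClusterOrbit₁₀.base

/-- For nonnegative integers `k₂, k₃`, the set of positive integer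
solutions of `X⁴ + k₃X²Y + k₂X²Z + Y² + Z² + 2YZ = (5+k₂+k₃)X²YZ` is exactly the orbit
of `(1,1,1)` under the group generated by `μ₁, μ₂, μ₃`. -/
theorem stmt_12 (k₂ k₃ : ℕ) (X Y Z : ℚ) :
    markovClusterOrbit₁₀ k₂ k₃ X Y Z ↔
      ∃ a b c : ℤ, 0 < a ∧ 0 < b ∧ 0 < c ∧
        a ^ 4 + (k₃ : ℤ) * a ^ 2 * b + (k₂ : ℤ) * a ^ 2 * c + b ^ 2 + c ^ 2 + 2 * b * c =
          (5 + (k₂ : ℤ) + (k₃ : ℤ)) * a ^ 2 * b * c ∧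
        X = a ∧ Y = b ∧ Z = c := by
  constructor
  · intro h
    induction h with
    | base =>
      exact ⟨1, 1, 1, one_pos, one_pos, one_pos, by ring, by norm_num⟩
    | mu1 h ih =>
      obtain ⟨a, b, c, ha, hb, hc, heq, rfl, rfl, rfl⟩ := ih
      obtain ⟨a', ha', hprod, heq'⟩ := markov₁₀_mu1_step a b c ha hb hc heq
      refine ⟨a', b, c, ha', hb, hc, heq', ?_, rfl, rfl⟩
      rw [div_eq_iff (by exact_mod_cast ha.ne' : (a : ℚ) ≠ 0)]
      exact_mod_cast hprod.trans (mul_comm a a')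
    | mu2 h ih =>
      obtain ⟨a, b, c, ha, hb, hc, heq, rfl, rfl, rfl⟩ := ih
      obtain ⟨b', hb', hprod, heq'⟩ := markov₁₀_mu2_step a b c (by positivity) ha hb hc heq
      refine ⟨a, b', c, ha, hb', hc, heq', rfl, ?_, rfl⟩
      rw [div_eq_iff (by exact_mod_cast hb.ne' : (b : ℚ) ≠ 0)]
      exact_mod_cast congrArg (fun x : ℤ => (x : ℚ)) (hprod.symm.trans (mul_comm b b'))
    | mu3 h ih =>
      obtain ⟨a, b, c, ha, hb, hc, heq, rfl, rfl, rfl⟩ := ih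
      obtain ⟨c', hc', hprod, heq'⟩ := markov₁₀_mu3_step a b c (by positivity) ha hb hc heq
      refine ⟨a, b, c', ha, hb, hc', heq', rfl, rfl, ?_⟩
      rw [div_eq_iff (by exact_mod_cast hc.ne' : (c : ℚ) ≠ 0)]
      exact_mod_cast congrArg (fun x : ℤ => (x : ℚ)) (hprod.symm.trans (mul_comm c c'))
  · rintro ⟨a, b, c, ha, hb, hc, heq, rfl, rfl, rfl⟩
    exact markov₁₀_bwd k₂ k₃ (a + b + c).toNat a b c ha hb hc (Int.self_le_toNat _) heq
end

section
/- For nonnegative integers k₁, k₂, the set of positive integer solutions of X² + Y⁴ + Z⁴ + 2X(Y² + Z²) + k₁YZ(X + Y² + Z²) + k₂Y²Z² = (7 + 3k₁ + k₂)XY²Z² is exactly the orbit of (1,1,1) under the group generated by μ₁(X,Y,Z) = ((Y⁴ + k₁Y³Z + k₂Y²Z² + k₁YZ³ + Z⁴)/X, Y, Z), μ₂(X,Y,Z) = (X, (X + Z²)/Y, Z), μ₃(X,Y,Z) = (X, Y, (X + Y²)/Z). -/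
set_option maxHeartbeats 4000000


/-- The orbit of `(1,1,1)` under the group generated by the three mutation maps
`μ₁(X,Y,Z) = ((Y⁴+k₁Y³Z+k₂Y²Z²+k₁YZ³+Z⁴)/X, Y, Z)`, `μ₂(X,Y,Z) = (X, (X+Z²)/Y, Z)`,
`μ₃(X,Y,Z) = (X, Y, (X+Y²)/Z)` on positive rational triples: the smallest set containing
`(1,1,1)` and closed under `μ₁, μ₂, μ₃` (each `μᵢ` is an involution on the solution set,
so this closure is the group orbit). -/
inductive markovClusterOrbit₇ (k₁ k₂ : ℕ) : ℚ → ℚ → ℚ → Prop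
  | base : markovClusterOrbit₇ k₁ k₂ 1 1 1
  | mu1 {x y z : ℚ} : markovClusterOrbit₇ k₁ k₂ x y z →
      markovClusterOrbit₇ k₁ k₂
        ((y ^ 4 + k₁ * y ^ 3 * z + k₂ * y ^ 2 * z ^ 2 + k₁ * y * z ^ 3 + z ^ 4) / x) y z
  | mu2 {x y z : ℚ} : markovClusterOrbit₇ k₁ k₂ x y z →
      markovClusterOrbit₇ k₁ k₂ x ((x + z ^ 2) / y) z
  | mu3 {x y z : ℚ} : markovClusterOrbit₇ k₁ k₂ x y z →
      markovClusterOrbit₇ k₁ k₂ x y ((x + y ^ 2) / z)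

/-- If `n² ∣ m(m+nt)` then `n ∣ m`. -/
lemma dvd_of_sq_dvd_mul' (m n t : ℤ) (hn : n ≠ 0) (h : n^2 ∣ m * (m + n*t)) : n ∣ m := by
  have hg : 0 < Int.gcd m n := Int.gcd_pos_of_ne_zero_right m hn
  obtain ⟨m', n', hco, hm, hn'⟩ := Int.exists_gcd_one hg
  set g : ℤ := (Int.gcd m n : ℤ) with hgdef
  have hg0 : g ≠ 0 := by positivity
  have key : n'^2 ∣ m' * (m' + n'*t) := by
    have h2 : g^2 * n'^2 ∣ g^2 * (m' * (m' + n'*t)) := by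
      have e1 : m * (m + n*t) = g^2 * (m' * (m' + n'*t)) := by rw [hm, hn']; ring
      have e2 : n^2 = g^2 * n'^2 := by rw [hn']; ring
      rw [e1, e2] at h; exact h
    exact (mul_dvd_mul_iff_left (pow_ne_zero 2 hg0)).mp h2
  have hcoZ : IsCoprime m' n' := Int.isCoprime_iff_gcd_eq_one.mpr hco
  have h1 : IsCoprime n' m' := hcoZ.symm
  have h2 : IsCoprime n' (m' + n'*t) := h1.add_mul_left_right t
  have hcop : IsCoprime (n'^2) (m' * (m' + n'*t)) := (h1.mul_right h2).pow_left
  have hu : IsUnit (n'^2) := hcop.isUnit_of_dvd key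
  have h3 : n'^2 = 1 := by
    rcases Int.isUnit_iff.mp hu with h | h
    · exact h
    · nlinarith [sq_nonneg n']
  have h4 : n * n' = g := by rw [hn']; nlinarith [h3]
  exact (Dvd.intro _ h4).trans (Dvd.intro_left m' hm.symm)

section

variable (k₁ k₂ : ℤ)

/-- The equation is symmetric in `b`, `c`. -/
lemma mceSymm (a b c : ℤ)
    (hE : a ^ 2 + b ^ 4 + c ^ 4 + 2 * a * (b ^ 2 + c ^ 2) +
            k₁ * b * c * (a + b ^ 2 + c ^ 2) + k₂ * b ^ 2 * c ^ 2 =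
          (7 + 3 * k₁ + k₂) * a * b ^ 2 * c ^ 2) :
    a ^ 2 + c ^ 4 + b ^ 4 + 2 * a * (c ^ 2 + b ^ 2) +
            k₁ * c * b * (a + c ^ 2 + b ^ 2) + k₂ * c ^ 2 * b ^ 2 =
          (7 + 3 * k₁ + k₂) * a * c ^ 2 * b ^ 2 := by linear_combination hE

/-- `b` divides `a + c²` for any solution. -/
lemma mceDvd (a b c : ℤ) (hb : b ≠ 0)
    (hE : a ^ 2 + b ^ 4 + c ^ 4 + 2 * a * (b ^ 2 + c ^ 2) +
            k₁ * b * c * (a + b ^ 2 + c ^ 2) + k₂ * b ^ 2 * c ^ 2 =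
          (7 + 3 * k₁ + k₂) * a * b ^ 2 * c ^ 2) :
    b ∣ a + c ^ 2 := by
  apply dvd_of_sq_dvd_mul' (a + c^2) b (k₁ * c) hb
  exact ⟨(7+3*k₁+k₂)*a*c^2 - b^2 - 2*a - k₁*b*c - k₂*c^2, by linear_combination hE⟩

/-- Vieta jump in the first coordinate: the product identity. -/
lemma mceMu1Prod (a b c : ℤ)
    (hE : a ^ 2 + b ^ 4 + c ^ 4 + 2 * a * (b ^ 2 + c ^ 2) +
            k₁ * b * c * (a + b ^ 2 + c ^ 2) + k₂ * b ^ 2 * c ^ 2 =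
          (7 + 3 * k₁ + k₂) * a * b ^ 2 * c ^ 2) :
    a * ((7+3*k₁+k₂)*b^2*c^2 - 2*b^2 - 2*c^2 - k₁*b*c - a)
      = b ^ 4 + k₁ * b ^ 3 * c + k₂ * b ^ 2 * c ^ 2 + k₁ * b * c ^ 3 + c ^ 4 := by
  linear_combination -hE

lemma mceMu1Sol (a b c : ℤ)
    (hE : a ^ 2 + b ^ 4 + c ^ 4 + 2 * a * (b ^ 2 + c ^ 2) +
            k₁ * b * c * (a + b ^ 2 + c ^ 2) + k₂ * b ^ 2 * c ^ 2 =
          (7 + 3 * k₁ + k₂) * a * b ^ 2 * c ^ 2) :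
    ((7+3*k₁+k₂)*b^2*c^2 - 2*b^2 - 2*c^2 - k₁*b*c - a) ^ 2 + b ^ 4 + c ^ 4
        + 2 * ((7+3*k₁+k₂)*b^2*c^2 - 2*b^2 - 2*c^2 - k₁*b*c - a) * (b ^ 2 + c ^ 2) +
            k₁ * b * c * (((7+3*k₁+k₂)*b^2*c^2 - 2*b^2 - 2*c^2 - k₁*b*c - a) + b ^ 2 + c ^ 2)
            + k₂ * b ^ 2 * c ^ 2 =
          (7 + 3 * k₁ + k₂) * ((7+3*k₁+k₂)*b^2*c^2 - 2*b^2 - 2*c^2 - k₁*b*c - a) * b ^ 2 * c ^ 2 := by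
  linear_combination hE

/-- Vieta jump in the second coordinate preserves the equation. -/
lemma mceMu2Sol (a b c d : ℤ) (hb : b ≠ 0) (hbd : b * d = a + c ^ 2)
    (hE : a ^ 2 + b ^ 4 + c ^ 4 + 2 * a * (b ^ 2 + c ^ 2) +
            k₁ * b * c * (a + b ^ 2 + c ^ 2) + k₂ * b ^ 2 * c ^ 2 =
          (7 + 3 * k₁ + k₂) * a * b ^ 2 * c ^ 2) :
    a ^ 2 + d ^ 4 + c ^ 4 + 2 * a * (d ^ 2 + c ^ 2) +
            k₁ * d * c * (a + d ^ 2 + c ^ 2) + k₂ * d ^ 2 * c ^ 2 =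
          (7 + 3 * k₁ + k₂) * a * d ^ 2 * c ^ 2 := by
  have H : b^4 * (a ^ 2 + d ^ 4 + c ^ 4 + 2 * a * (d ^ 2 + c ^ 2) +
            k₁ * d * c * (a + d ^ 2 + c ^ 2) + k₂ * d ^ 2 * c ^ 2)
      = b^4 * ((7 + 3 * k₁ + k₂) * a * d ^ 2 * c ^ 2) := by
    linear_combination (a + c^2)^2 * hE +
      (c^6 + b*c^4*d + b*c^5*k₁ + b^2*c^2*d^2 + b^2*c^3*d*k₁ + b^2*c^4*k₂ + b^3*d^3
        + b^3*c*d^2*k₁ + b^3*c^2*d*k₂ + b^3*c^3*k₁ + 3*a*c^4 + 2*a*b*c^2*d + 2*a*b*c^3*k₁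
        + a*b^2*d^2 + a*b^2*c*d*k₁ + 2*a*b^2*c^2 + a*b^2*c^2*k₂ - 7*a*b^2*c^4 - a*b^2*c^4*k₂
        - 3*a*b^2*c^4*k₁ + 2*a*b^3*d + a*b^3*c*k₁ - 7*a*b^3*c^2*d - a*b^3*c^2*d*k₂
        - 3*a*b^3*c^2*d*k₁ + 3*a^2*c^2 + a^2*b*d + a^2*b*c*k₁ + 2*a^2*b^2 - 7*a^2*b^2*c^2
        - a^2*b^2*c^2*k₂ - 3*a^2*b^2*c^2*k₁ + a^3) * hbd
  exact mul_left_cancel₀ (pow_ne_zero 4 hb) H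

end


lemma coreUT (k₁ k₂ a u t : ℤ) (hk₁ : 0 ≤ k₁) (hk₂ : 0 ≤ k₂) (ha : 2 ≤ a) (ht : 2 ≤ t)
    (hu4 : 4*t ≤ u)
    (hA : u^2 + k₁*t*u + (k₂-2)*t^2 = (7+3*k₁+k₂)*a*t^2)
    (hI : 2*u + k₁*t ≤ (7+3*k₁+k₂)*t^2)
    (hC1 : u ≤ 2*a + 2*t - 1)
    (hD1 : u ≤ a + t^2 + 1) : False := by
  have ht0 : (0:ℤ) < t := by linarith
  have hT1 : (7+3*k₁+k₂)*t^2*(u - 2*t + 1) ≤ 2*(u^2 + k₁*t*u + (k₂-2)*t^2) := by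
    have h2a : u - 2*t + 1 ≤ 2*a := by linarith
    nlinarith [mul_le_mul_of_nonneg_left h2a (by positivity : (0:ℤ) ≤ (7+3*k₁+k₂)*t^2), hA]
  have hT2 : (7+3*k₁+k₂)*t^2*(u - t^2 - 1) ≤ u^2 + k₁*t*u + (k₂-2)*t^2 := by
    have h2a : u - t^2 - 1 ≤ a := by linarith
    nlinarith [mul_le_mul_of_nonneg_left h2a (by positivity : (0:ℤ) ≤ (7+3*k₁+k₂)*t^2), hA]
  have stepA : 2*t^2 + k₁*t + k₂ + 2 ≤ u := by
    by_contra h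
    push_neg at h
    set Y : ℤ := 2*t^2 + k₁*t + k₂ + 1 with hYdef
    have e1 : 0 ≤ Y - u := by omega
    have e2 : 0 ≤ u - 4*t := by linarith
    have eY4 : 0 < Y - 4*t := by nlinarith [sq_nonneg (t-1), mul_nonneg hk₁ ht0.le]
    have hφ : 0 ≤ 2*(u^2 + k₁*t*u + (k₂-2)*t^2) - (7+3*k₁+k₂)*t^2*(u - 2*t + 1) := by
      linarith [hT1]
    have h4t : 2*((4*t)^2 + k₁*t*(4*t) + (k₂-2)*t^2) - (7+3*k₁+k₂)*t^2*((4*t) - 2*t + 1)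
        ≤ -7*t^2 := by
      nlinarith [mul_nonneg (sq_nonneg t)
        (show (0:ℤ) ≤ 14*t - 28 + k₁*(6*t-5) + k₂*(2*t-1) by
          nlinarith [mul_nonneg hk₁ (by linarith : (0:ℤ) ≤ 6*t-5),
                     mul_nonneg hk₂ (by linarith : (0:ℤ) ≤ 2*t-1)])]
    have hYv : 2*(Y^2 + k₁*t*Y + (k₂-2)*t^2) - (7+3*k₁+k₂)*t^2*(Y - 2*t + 1) ≤ -t^2 := by
      have b0 : (0:ℤ) ≤ 6*t^4 - 14*t^3 + 9*t^2 - 2 := by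
        nlinarith [mul_nonneg (sq_nonneg t) (mul_nonneg (by linarith : (0:ℤ) ≤ 3*t-1) (by linarith : (0:ℤ) ≤ t-2)), sq_nonneg t, ht0]
      have b1 : (0:ℤ) ≤ k₁*(6*t^4 - 11*t^3 + 6*t^2 - 6*t) := by
        refine mul_nonneg hk₁ ?_
        nlinarith [mul_nonneg (mul_nonneg ht0.le (by linarith : (0:ℤ) ≤ t-2)) (by positivity : (0:ℤ) ≤ 6*t^2+t+8), ht0]
      have b2 : (0:ℤ) ≤ k₂*(2*t^4 - 2*t^3 - t^2 - 4) := by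
        refine mul_nonneg hk₂ ?_
        nlinarith [mul_nonneg (by linarith : (0:ℤ) ≤ t-2) (by positivity : (0:ℤ) < 2*t^3+2*t^2+3*t+6).le]
      have b11 : (0:ℤ) ≤ k₁*k₁*(3*t^3 - 4*t^2) := by
        refine mul_nonneg (mul_nonneg hk₁ hk₁) ?_
        nlinarith [mul_nonneg (sq_nonneg t) (by linarith : (0:ℤ) ≤ 3*t-4)]
      have b12 : (0:ℤ) ≤ k₁*k₂*(t^3 + 3*t^2 - 6*t) := by
        refine mul_nonneg (mul_nonneg hk₁ hk₂) ?_
        nlinarith [mul_nonneg ht0.le (by nlinarith : (0:ℤ) ≤ t^2+3*t-6)]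
      have b22 : (0:ℤ) ≤ k₂*k₂*(t^2 - 2) := by
        refine mul_nonneg (mul_nonneg hk₂ hk₂) ?_; nlinarith
      rw [hYdef]; nlinarith [b0, b1, b2, b11, b12, b22]
    have m1 := mul_le_mul_of_nonneg_left h4t e1
    have m2 := mul_le_mul_of_nonneg_left hYv e2
    have m3 : 0 ≤ (Y - 4*t) * (2*(u^2 + k₁*t*u + (k₂-2)*t^2) - (7+3*k₁+k₂)*t^2*(u - 2*t + 1)) :=
      mul_nonneg eY4.le hφ
    have m4 : 0 ≤ (Y - 4*t) * ((u - 4*t)*(Y - u)) := mul_nonneg eY4.le (mul_nonneg e2 e1)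
    nlinarith [m1, m2, m3, m4, mul_pos (mul_pos ht0 ht0) eY4, mul_nonneg (mul_nonneg ht0.le ht0.le) e1, mul_nonneg (mul_nonneg ht0.le ht0.le) e2]
  have hposu : 0 < u - t^2 - 1 := by nlinarith
  have hV : u^2 ≤ 2*u*(t^2+1) + k₁*t*(t^2+1) + (k₂-2)*t^2 := by
    have := mul_le_mul_of_nonneg_right hI (le_of_lt hposu)
    nlinarith [hT2, this]
  have hu0 : (0:ℤ) < u := by linarith
  nlinarith [hV, stepA, mul_nonneg (by positivity : (0:ℤ) ≤ k₁*t + k₂) (by nlinarith [mul_nonneg hk₁ ht0.le] : (0:ℤ) ≤ u - 2*t^2 - 2),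
    mul_le_mul_of_nonneg_left (show k₁*t + k₂ ≤ u - 2*t^2 - 2 by linarith) hu0.le,
    mul_nonneg (by positivity : (0:ℤ) ≤ k₁*t + k₂) (by positivity : (0:ℤ) ≤ t^2),
    mul_pos ht0 ht0]


section
variable (k₁ k₂ : ℤ)

lemma keyabc (a b c : ℤ) (hk₁ : 0 ≤ k₁) (hk₂ : 0 ≤ k₂) (ha : 2 ≤ a) (hb : 1 ≤ b)
    (hbc : b ≤ c) (hc2 : 2 ≤ c)
    (hE : a ^ 2 + b ^ 4 + c ^ 4 + 2 * a * (b ^ 2 + c ^ 2) +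
            k₁ * b * c * (a + b ^ 2 + c ^ 2) + k₂ * b ^ 2 * c ^ 2 =
          (7 + 3 * k₁ + k₂) * a * b ^ 2 * c ^ 2)
    (h2 : c^2 ≤ a + b^2)
    (h3 : a^2 ≤ b ^ 4 + k₁ * b ^ 3 * c + k₂ * b ^ 2 * c ^ 2 + k₁ * b * c ^ 3 + c ^ 4) :
    False := by
  have hc0 : (0:ℤ) < c := by linarith
  have hb0 : (0:ℤ) < b := by linarith
  have ht : 2 ≤ b*c := by nlinarith
  apply coreUT k₁ k₂ a (a + b^2 + c^2) (b*c) hk₁ hk₂ ha ht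
  · -- 4t ≤ u
    have e : (a + b^2 + c^2 - 4*(b*c)) * (a + b^2 + c^2 + (4+k₁)*(b*c))
        = ((7+3*k₁+k₂)*(a-2) + 2*k₁ + k₂) * (b*c)^2 := by linear_combination hE
    have hrhs : 0 ≤ ((7+3*k₁+k₂)*(a-2) + 2*k₁ + k₂) * (b*c)^2 := by
      have : 0 ≤ (7+3*k₁+k₂)*(a-2) + 2*k₁ + k₂ := by nlinarith
      positivity
    have hpos : 0 < a + b^2 + c^2 + (4+k₁)*(b*c) := by nlinarith [mul_nonneg hk₁ (by positivity : (0:ℤ) ≤ b*c)]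
    by_contra h
    push_neg at h
    nlinarith [e, hrhs, hpos, mul_pos (by linarith : (0:ℤ) < 4*(b*c) - (a+b^2+c^2)) hpos]
  · -- hA
    linear_combination hE
  · -- hI
    nlinarith [h3, hE, mul_pos (by linarith : (0:ℤ) < a) (by linarith : (0:ℤ) < a)]
  · -- hC1
    by_contra h
    push_neg at h
    nlinarith [h2, h, mul_nonneg (sub_nonneg.mpr hbc) hb0.le, mul_pos hb0 hc0]
  · -- hD1
    nlinarith [mul_nonneg (by nlinarith : (0:ℤ) ≤ b^2 - 1) (by nlinarith : (0:ℤ) ≤ c^2 - 1)]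

/-- A solution with no strictly decreasing mutation (and b ≤ c) is (1,1,1). -/
lemma auxMin (a b c : ℤ) (hk₁ : 0 ≤ k₁) (hk₂ : 0 ≤ k₂) (ha : 1 ≤ a) (hb : 1 ≤ b)
    (hbc : b ≤ c)
    (hE : a ^ 2 + b ^ 4 + c ^ 4 + 2 * a * (b ^ 2 + c ^ 2) +
            k₁ * b * c * (a + b ^ 2 + c ^ 2) + k₂ * b ^ 2 * c ^ 2 =
          (7 + 3 * k₁ + k₂) * a * b ^ 2 * c ^ 2)
    (h2 : c^2 ≤ a + b^2)
    (h3 : a^2 ≤ b ^ 4 + k₁ * b ^ 3 * c + k₂ * b ^ 2 * c ^ 2 + k₁ * b * c ^ 3 + c ^ 4) :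
    a = 1 ∧ b = 1 ∧ c = 1 := by
  have hc : 1 ≤ c := le_trans hb hbc
  have ha1 : a = 1 := by
    by_contra h
    have ha2 : 2 ≤ a := by omega
    rcases lt_or_ge c 2 with hcs | hcl
    · -- c = 1 hence b = 1
      have hc1 : c = 1 := by omega
      have hb1 : b = 1 := by omega
      subst hc1; subst hb1
      have fac : (a - 1) * (a - (2 + 2*k₁ + k₂)) = 0 := by linear_combination hE
      rcases mul_eq_zero.mp fac with h1 | h1
      · omega
      · have : a = 2 + 2*k₁ + k₂ := by linarith
        nlinarith [h3]
    · exact keyabc k₁ k₂ a b c hk₁ hk₂ ha2 hb hbc hcl hE h2 h3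
  subst ha1
  have fac : (b^2 + c^2 + 1 - 3*(b*c)) * (b^2 + c^2 + 1 + (3+k₁)*(b*c)) = 0 := by
    linear_combination hE
  have hpos : 0 < b^2 + c^2 + 1 + (3+k₁)*(b*c) := by
    nlinarith [mul_nonneg hk₁ (by positivity : (0:ℤ) ≤ b*c)]
  have h0 : b^2 + c^2 + 1 - 3*(b*c) = 0 := by
    rcases mul_eq_zero.mp fac with h1 | h1
    · exact h1
    · omega
  have hcb : c = b := by
    by_contra h
    have h' : b + 1 ≤ c := by omega
    nlinarith [h2, mul_le_mul h' h' (by linarith) (by linarith : (0:ℤ) ≤ c)]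
  rw [hcb] at h0
  have hb1 : b = 1 := by nlinarith [h0]
  exact ⟨rfl, hb1, by omega⟩

end


section
variable (k₁ k₂ : ℤ)

lemma mceNpos (b c : ℤ) (hk₁ : 0 ≤ k₁) (hk₂ : 0 ≤ k₂) (hb : 0 < b) (hc : 0 < c) :
    0 < b ^ 4 + k₁ * b ^ 3 * c + k₂ * b ^ 2 * c ^ 2 + k₁ * b * c ^ 3 + c ^ 4 := by
  nlinarith [pow_pos hb 4, pow_pos hc 4,
    mul_nonneg (mul_nonneg hk₁ (pow_pos hb 3).le) hc.le,
    mul_nonneg (mul_nonneg hk₂ (pow_pos hb 2).le) (pow_pos hc 2).le,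
    mul_nonneg (mul_nonneg hk₁ hb.le) (pow_pos hc 3).le]

end

lemma solToOrbit (k₁ k₂ : ℕ) : ∀ n : ℕ, ∀ a b c : ℤ, 0 < a → 0 < b → 0 < c →
    (a ^ 2 + b ^ 4 + c ^ 4 + 2 * a * (b ^ 2 + c ^ 2) +
        (k₁ : ℤ) * b * c * (a + b ^ 2 + c ^ 2) + (k₂ : ℤ) * b ^ 2 * c ^ 2 =
      (7 + 3 * (k₁ : ℤ) + (k₂ : ℤ)) * a * b ^ 2 * c ^ 2) →
    a + b + c ≤ (n : ℤ) → markovClusterOrbit₇ k₁ k₂ (a : ℚ) (b : ℚ) (c : ℚ) := by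
  have hk₁ : (0:ℤ) ≤ (k₁:ℤ) := Int.natCast_nonneg _
  have hk₂ : (0:ℤ) ≤ (k₂:ℤ) := Int.natCast_nonneg _
  intro n
  induction n with
  | zero => intro a b c ha hb hc _ hsum; exfalso; omega
  | succ n ih =>
    intro a b c ha hb hc hE hsum
    by_cases h₂ : a + c ^ 2 < b ^ 2
    · -- μ₂ decreases b
      obtain ⟨d, hd⟩ := mceDvd (k₁:ℤ) (k₂:ℤ) a b c hb.ne' hE
      have hd0 : 0 < d := by nlinarith [hd, pow_pos hc 2]
      have hdb : d < b := by nlinarith [hd]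
      have hE' := mceMu2Sol (k₁:ℤ) (k₂:ℤ) a b c d hb.ne' hd.symm hE
      have horb := ih a d c ha hd0 hc hE' (by omega)
      have hdiv : ((a:ℚ) + (c:ℚ) ^ 2) / (d:ℚ) = (b:ℚ) := by
        rw [div_eq_iff (show (d:ℚ) ≠ 0 by exact_mod_cast hd0.ne')]
        exact_mod_cast (by linarith [hd] : a + c ^ 2 = b * d)
      have h := markovClusterOrbit₇.mu2 horb
      rwa [hdiv] at h
    · by_cases h₃ : a + b ^ 2 < c ^ 2
      · -- μ₃ decreases c
        have hEs := mceSymm (k₁:ℤ) (k₂:ℤ) a b c hE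
        obtain ⟨d, hd⟩ := mceDvd (k₁:ℤ) (k₂:ℤ) a c b hc.ne' hEs
        have hd0 : 0 < d := by nlinarith [hd, pow_pos hb 2]
        have hdc : d < c := by nlinarith [hd]
        have hE' := mceSymm (k₁:ℤ) (k₂:ℤ) a d b
          (mceMu2Sol (k₁:ℤ) (k₂:ℤ) a c b d hc.ne' hd.symm hEs)
        have horb := ih a b d ha hb hd0 hE' (by omega)
        have hdiv : ((a:ℚ) + (b:ℚ) ^ 2) / (d:ℚ) = (c:ℚ) := by
          rw [div_eq_iff (show (d:ℚ) ≠ 0 by exact_mod_cast hd0.ne')]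
          exact_mod_cast (by linarith [hd] : a + b ^ 2 = c * d)
        have h := markovClusterOrbit₇.mu3 horb
        rwa [hdiv] at h
      · by_cases h₁ : b ^ 4 + (k₁:ℤ) * b ^ 3 * c + (k₂:ℤ) * b ^ 2 * c ^ 2
            + (k₁:ℤ) * b * c ^ 3 + c ^ 4 < a ^ 2
        · -- μ₁ decreases a
          have hprod := mceMu1Prod (k₁:ℤ) (k₂:ℤ) a b c hE
          have hN := mceNpos (k₁:ℤ) (k₂:ℤ) b c hk₁ hk₂ hb hc
          set a₁ : ℤ := (7+3*(k₁:ℤ)+(k₂:ℤ))*b^2*c^2 - 2*b^2 - 2*c^2 - (k₁:ℤ)*b*c - a with ha₁def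
          have ha₁ : 0 < a₁ := by nlinarith [hprod, hN]
          have ha₁a : a₁ < a := by nlinarith [hprod, h₁]
          have hE' := mceMu1Sol (k₁:ℤ) (k₂:ℤ) a b c hE
          have horb := ih a₁ b c ha₁ hb hc hE' (by omega)
          have hdiv : (((b:ℚ)) ^ 4 + (k₁:ℚ) * (b:ℚ) ^ 3 * (c:ℚ) + (k₂:ℚ) * (b:ℚ) ^ 2 * (c:ℚ) ^ 2
              + (k₁:ℚ) * (b:ℚ) * (c:ℚ) ^ 3 + (c:ℚ) ^ 4) / (a₁:ℚ) = (a:ℚ) := by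
            rw [div_eq_iff (show (a₁:ℚ) ≠ 0 by exact_mod_cast ha₁.ne')]
            have hq : ((a:ℚ)) * ((7+3*(k₁:ℚ)+(k₂:ℚ))*(b:ℚ)^2*(c:ℚ)^2 - 2*(b:ℚ)^2 - 2*(c:ℚ)^2
                - (k₁:ℚ)*(b:ℚ)*(c:ℚ) - (a:ℚ)) = (b:ℚ) ^ 4 + (k₁:ℚ) * (b:ℚ) ^ 3 * (c:ℚ)
                + (k₂:ℚ) * (b:ℚ) ^ 2 * (c:ℚ) ^ 2 + (k₁:ℚ) * (b:ℚ) * (c:ℚ) ^ 3 + (c:ℚ) ^ 4 := by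
              exact_mod_cast hprod
            rw [ha₁def]
            push_cast
            linear_combination -hq
          have h := markovClusterOrbit₇.mu1 horb
          rwa [hdiv] at h
        · -- minimal solution
          push_neg at h₁ h₂ h₃
          have h111 : a = 1 ∧ b = 1 ∧ c = 1 := by
            rcases le_total b c with hbc | hcb
            · exact auxMin (k₁:ℤ) (k₂:ℤ) a b c hk₁ hk₂ ha hb hbc hE h₃ h₁
            · obtain ⟨x, y, z⟩ := auxMin (k₁:ℤ) (k₂:ℤ) a c b hk₁ hk₂ ha hc hcb
                (mceSymm (k₁:ℤ) (k₂:ℤ) a b c hE) h₂ (by linarith [h₁])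
              exact ⟨x, z, y⟩
          obtain ⟨ha1, hb1, hc1⟩ := h111
          rw [ha1, hb1, hc1]
          norm_num
          exact markovClusterOrbit₇.base

/-- For nonnegative integers `k₁, k₂`, the set of positive integer
solutions of
`X² + Y⁴ + Z⁴ + 2X(Y²+Z²) + k₁YZ(X+Y²+Z²) + k₂Y²Z² = (7+3k₁+k₂)XY²Z²` is exactly the
orbit of `(1,1,1)` under the group generated by `μ₁, μ₂, μ₃`. -/
theorem stmt_13 (k₁ k₂ : ℕ) (X Y Z : ℚ) :
    markovClusterOrbit₇ k₁ k₂ X Y Z ↔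
      ∃ a b c : ℤ, 0 < a ∧ 0 < b ∧ 0 < c ∧
        a ^ 2 + b ^ 4 + c ^ 4 + 2 * a * (b ^ 2 + c ^ 2) +
            (k₁ : ℤ) * b * c * (a + b ^ 2 + c ^ 2) + (k₂ : ℤ) * b ^ 2 * c ^ 2 =
          (7 + 3 * (k₁ : ℤ) + (k₂ : ℤ)) * a * b ^ 2 * c ^ 2 ∧
        X = a ∧ Y = b ∧ Z = c := by
  have hk₁ : (0:ℤ) ≤ (k₁:ℤ) := Int.natCast_nonneg _
  have hk₂ : (0:ℤ) ≤ (k₂:ℤ) := Int.natCast_nonneg _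
  constructor
  · intro h
    induction h with
    | base => exact ⟨1, 1, 1, one_pos, one_pos, one_pos, by ring, by norm_num, by norm_num, by norm_num⟩
    | @mu1 x y z hxyz ih =>
      obtain ⟨a, b, c, ha, hb, hc, hE, hX, hY, hZ⟩ := ih
      subst hX; subst hY; subst hZ
      have hprod := mceMu1Prod (k₁:ℤ) (k₂:ℤ) a b c hE
      have hN := mceNpos (k₁:ℤ) (k₂:ℤ) b c hk₁ hk₂ hb hc
      refine ⟨(7+3*(k₁:ℤ)+(k₂:ℤ))*b^2*c^2 - 2*b^2 - 2*c^2 - (k₁:ℤ)*b*c - a, b, c,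
        by nlinarith [hprod, hN], hb, hc, mceMu1Sol (k₁:ℤ) (k₂:ℤ) a b c hE, ?_, rfl, rfl⟩
      rw [div_eq_iff (show (a:ℚ) ≠ 0 by exact_mod_cast ha.ne')]
      have hq : ((a:ℚ)) * ((7+3*(k₁:ℚ)+(k₂:ℚ))*(b:ℚ)^2*(c:ℚ)^2 - 2*(b:ℚ)^2 - 2*(c:ℚ)^2
          - (k₁:ℚ)*(b:ℚ)*(c:ℚ) - (a:ℚ)) = (b:ℚ) ^ 4 + (k₁:ℚ) * (b:ℚ) ^ 3 * (c:ℚ)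
          + (k₂:ℚ) * (b:ℚ) ^ 2 * (c:ℚ) ^ 2 + (k₁:ℚ) * (b:ℚ) * (c:ℚ) ^ 3 + (c:ℚ) ^ 4 := by
        exact_mod_cast hprod
      push_cast
      linear_combination -hq
    | @mu2 x y z hxyz ih =>
      obtain ⟨a, b, c, ha, hb, hc, hE, hX, hY, hZ⟩ := ih
      subst hX; subst hY; subst hZ
      obtain ⟨d, hd⟩ := mceDvd (k₁:ℤ) (k₂:ℤ) a b c hb.ne' hE
      have hd0 : 0 < d := by nlinarith [hd, pow_pos hc 2]
      refine ⟨a, d, c, ha, hd0, hc, mceMu2Sol (k₁:ℤ) (k₂:ℤ) a b c d hb.ne' hd.symm hE, rfl, ?_, rfl⟩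
      rw [div_eq_iff (show (b:ℚ) ≠ 0 by exact_mod_cast hb.ne')]
      exact_mod_cast (by linarith [hd] : a + c ^ 2 = d * b)
    | @mu3 x y z hxyz ih =>
      obtain ⟨a, b, c, ha, hb, hc, hE, hX, hY, hZ⟩ := ih
      subst hX; subst hY; subst hZ
      have hEs := mceSymm (k₁:ℤ) (k₂:ℤ) a b c hE
      obtain ⟨d, hd⟩ := mceDvd (k₁:ℤ) (k₂:ℤ) a c b hc.ne' hEs
      have hd0 : 0 < d := by nlinarith [hd, pow_pos hb 2]
      refine ⟨a, b, d, ha, hb, hd0,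
        mceSymm (k₁:ℤ) (k₂:ℤ) a d b (mceMu2Sol (k₁:ℤ) (k₂:ℤ) a c b d hc.ne' hd.symm hEs),
        rfl, rfl, ?_⟩
      rw [div_eq_iff (show (c:ℚ) ≠ 0 by exact_mod_cast hc.ne')]
      exact_mod_cast (by linarith [hd] : a + b ^ 2 = d * c)
  · rintro ⟨a, b, c, ha, hb, hc, hE, rfl, rfl, rfl⟩
    exact solToOrbit k₁ k₂ (a+b+c).toNat a b c ha hb hc hE (Int.self_le_toNat _)
end

section
/- Let k₁, k₂ ≥ 0 be integers and A = 7 + 3k₁ + k₂, B = 2 + 2k₁ + k₂, C = 4 + k₁. If (x, y, z) is a positive integer solution of x² + y⁴ + z⁴ + 2x(y² + z²) + k₁yz(x + y² + z²) + k₂y²z² = A·xy²z² with y = z, then (x, y, z) = (1, 1, 1) or (x, y, z) = (2 + 2k₁ + k₂, 1, 1). -/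
/-- Let `k₁, k₂ ≥ 0` be integers, `A = 7 + 3k₁ + k₂`, `B = 2 + 2k₁ + k₂`,
`C = 4 + k₁`.  If `(x, y, z)` is a positive integer solution of
`x² + y⁴ + z⁴ + 2x(y²+z²) + k₁yz(x+y²+z²) + k₂y²z² = A·xy²z²` with `y = z`, then
`(x, y, z) = (1, 1, 1)` or `(x, y, z) = (2 + 2k₁ + k₂, 1, 1)`. -/
theorem stmt_14 (k₁ k₂ x y z : ℕ) (hx : 0 < x) (hy : 0 < y) (hz : 0 < z)
    (h : x ^ 2 + y ^ 4 + z ^ 4 + 2 * x * (y ^ 2 + z ^ 2) +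
        k₁ * y * z * (x + y ^ 2 + z ^ 2) + k₂ * y ^ 2 * z ^ 2 =
      (7 + 3 * k₁ + k₂) * x * y ^ 2 * z ^ 2)
    (hyz : y = z) :
    (x = 1 ∧ y = 1 ∧ z = 1) ∨ (x = 2 + 2 * k₁ + k₂ ∧ y = 1 ∧ z = 1) := by
  subst hyz
  set a : ℤ := 7 + 3 * (k₁ : ℤ) + k₂ with ha
  set b : ℤ := 2 + 2 * (k₁ : ℤ) + k₂ with hb
  set c : ℤ := 4 + (k₁ : ℤ) with hc
  set X : ℤ := (x : ℤ) with hX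
  set Y : ℤ := (y : ℤ) with hYdef
  have hk1 : (0 : ℤ) ≤ (k₁ : ℤ) := Int.natCast_nonneg _
  have hk2 : (0 : ℤ) ≤ (k₂ : ℤ) := Int.natCast_nonneg _
  have hXpos : (0 : ℤ) < X := by rw [hX]; exact_mod_cast hx
  have hYpos : (0 : ℤ) < Y := by rw [hYdef]; exact_mod_cast hy
  have hBpos : (0 : ℤ) < b := by rw [hb]; positivity
  have hA : (0 : ℤ) < a := by rw [ha]; positivity
  have E : X ^ 2 + b * Y ^ 4 + c * X * Y ^ 2 = a * X * Y ^ 4 := by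
    have h' : ((x : ℤ) ^ 2 + y ^ 4 + y ^ 4 + 2 * x * (y ^ 2 + y ^ 2) +
        k₁ * y * y * (x + y ^ 2 + y ^ 2) + k₂ * y ^ 2 * y ^ 2 =
      (7 + 3 * k₁ + k₂) * x * y ^ 2 * y ^ 2) := by exact_mod_cast h
    rw [ha, hb, hc, hX, hYdef]; linear_combination h'
  -- key square identity
  have hm : (2 * (a * X - b) * Y ^ 2 - c * X) ^ 2
      = X ^ 2 * (4 * a * X + c ^ 2 - 4 * b) := by
    linear_combination (-4 * (a * X - b)) * E
  have hdvd : X ∣ 2 * (a * X - b) * Y ^ 2 - c * X := by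
    rw [← Int.pow_dvd_pow_iff (two_ne_zero)]
    exact ⟨4 * a * X + c ^ 2 - 4 * b, hm⟩
  have hdvd2 : X ∣ 2 * b * Y ^ 2 := by
    have h1 : X ∣ 2 * (a * X - b) * Y ^ 2 := by
      have h0 : X ∣ c * X := dvd_mul_left X c
      have h2 := hdvd.add h0
      rwa [sub_add_cancel] at h2
    have h2 : X ∣ 2 * a * X * Y ^ 2 := ⟨2 * a * Y ^ 2, by ring⟩
    have h3 : X ∣ 2 * a * X * Y ^ 2 - 2 * (a * X - b) * Y ^ 2 := h2.sub h1
    have h4 : 2 * a * X * Y ^ 2 - 2 * (a * X - b) * Y ^ 2 = 2 * b * Y ^ 2 := by ring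
    rwa [h4] at h3
  obtain ⟨t, ht⟩ := hdvd2
  have hYsq : (0 : ℤ) < Y ^ 2 := by positivity
  have htpos : (0 : ℤ) < t := by
    by_contra h'
    push_neg at h'
    nlinarith [mul_nonpos_of_nonneg_of_nonpos hXpos.le h', mul_pos hBpos hYsq]
  set s : ℤ := 2 * a * Y ^ 2 - t - 2 * c with hsdef
  have hBY : b * Y ^ 2 ≠ 0 := by positivity
  have hs : 2 * X = Y ^ 2 * s := by
    have key : b * Y ^ 2 * (2 * X) = b * Y ^ 2 * (Y ^ 2 * s) := by
      rw [hsdef]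
      linear_combination t * E + (X + c * Y ^ 2 - a * Y ^ 4) * ht
    exact mul_left_cancel₀ hBY key
  have hspos : (0 : ℤ) < s := by
    by_contra h'
    push_neg at h'
    nlinarith [mul_nonpos_of_nonneg_of_nonpos hYsq.le h']
  have hst : t * s = 4 * b := by
    have key : Y ^ 2 * (t * s) = Y ^ 2 * (4 * b) := by
      linear_combination (-t) * hs + (-2) * ht
    exact mul_left_cancel₀ (by positivity) key
  -- y = 1
  have hy1 : y = 1 := by
    by_contra hne
    have h2 : 2 ≤ y := by omega
    have hY2 : (2 : ℤ) ≤ Y := by rw [hYdef]; exact_mod_cast h2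
    have h1t : (1 : ℤ) ≤ t := htpos
    have h1s : (1 : ℤ) ≤ s := hspos
    have hbnd : (0:ℤ) ≤ (t - 1) * (s - 1) :=
      mul_nonneg (by linarith) (by linarith)
    have hbnd' : t + s ≤ t * s + 1 := by
      have h9 : (t - 1) * (s - 1) = t * s + 1 - t - s := by ring
      linarith [hbnd, h9]
    have hY4 : (0 : ℤ) ≤ Y ^ 2 - 4 := by
      have h9 : (Y - 2) * (Y + 2) = Y ^ 2 - 4 := by ring
      have h10 : (0:ℤ) ≤ (Y - 2) * (Y + 2) := mul_nonneg (by linarith) (by linarith)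
      linarith
    have haY : (0 : ℤ) ≤ a * (Y ^ 2 - 4) := mul_nonneg hA.le hY4
    have haY' : 8 * a ≤ 2 * a * Y ^ 2 := by
      have h9 : 2 * (a * (Y ^ 2 - 4)) = 2 * a * Y ^ 2 - 8 * a := by ring
      linarith [haY, h9]
    have hsexp : t + s = 2 * a * Y ^ 2 - 2 * c := by rw [hsdef]; ring
    rw [ha] at haY'
    rw [hst, hb] at hbnd'
    rw [hsexp, hc] at hbnd'
    linarith [hbnd', haY', hk1, hk2]
  have hY1 : Y = 1 := by rw [hYdef, hy1]; norm_num
  -- final quadratic in X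
  have E1 : X ^ 2 + b + c * X = a * X := by
    have h5 := E
    rw [hY1] at h5
    linear_combination h5
  have hac : a - c = b + 1 := by rw [ha, hb, hc]; ring
  have hfac : (X - 1) * (X - b) = 0 := by
    linear_combination E1 + X * hac
  rcases mul_eq_zero.mp hfac with h' | h'
  · left
    refine ⟨?_, hy1, hy1⟩
    have h6 : X = 1 := by linarith
    rw [hX] at h6
    exact_mod_cast h6
  · right
    refine ⟨?_, hy1, hy1⟩
    have h6 : X = b := by linarith
    rw [hX, hb] at h6
    exact_mod_cast h6
end

section
/- The Laurent polynomial F(x,y,z) = (x⁴ + k₃x²y + k₂x²z + y² + z² + 2yz)/(x²yz) (with parameters k₂, k₃) is invariant under the three maps μ₁(x,y,z) = ((y+z)/x, y, z), μ₂(x,y,z) = (x, (x⁴ + k₂x²z + z²)/y, z), μ₃(x,y,z) = (x, y, (x⁴ + k₃x²y + y²)/z), as identities of rational functions in x, y, z over ℚ(k₂, k₃). -/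
/-- The generators `x, y, z, k₂, k₃` of the field of rational functions
`ℚ(k₂, k₃, x, y, z)` in five variables. -/
noncomputable def rfVar (i : Fin 5) : FractionRing (MvPolynomial (Fin 5) ℚ) :=
  algebraMap (MvPolynomial (Fin 5) ℚ) (FractionRing (MvPolynomial (Fin 5) ℚ))
    (MvPolynomial.X i)

/-- `F(x,y,z) = (x⁴ + k₃x²y + k₂x²z + y² + z² + 2yz)/(x²yz)`. -/
noncomputable def F₃₁₀ (k₂ k₃ x y z : FractionRing (MvPolynomial (Fin 5) ℚ)) :
    FractionRing (MvPolynomial (Fin 5) ℚ) :=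
  (x ^ 4 + k₃ * x ^ 2 * y + k₂ * x ^ 2 * z + y ^ 2 + z ^ 2 + 2 * y * z) / (x ^ 2 * y * z)

open MvPolynomial in
lemma poly_ne_zero_of_eval {p : MvPolynomial (Fin 5) ℚ} (f : Fin 5 → ℚ)
    (h : MvPolynomial.eval f p ≠ 0) : p ≠ 0 := fun hp => h (by simp [hp])

lemma alg_ne_zero {p : MvPolynomial (Fin 5) ℚ} (h : p ≠ 0) :
    algebraMap (MvPolynomial (Fin 5) ℚ) (FractionRing (MvPolynomial (Fin 5) ℚ)) p ≠ 0 := by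
  intro h0
  exact h (IsFractionRing.injective (MvPolynomial (Fin 5) ℚ)
    (FractionRing (MvPolynomial (Fin 5) ℚ)) (by simpa using h0))


lemma gen_id1 {K : Type*} [Field K] (k₂ k₃ x y z : K)
    (hx : x ≠ 0) (hy : y ≠ 0) (hz : z ≠ 0) (hyz : y + z ≠ 0) :
    (((y+z)/x) ^ 4 + k₃ * ((y+z)/x) ^ 2 * y + k₂ * ((y+z)/x) ^ 2 * z + y ^ 2 + z ^ 2
      + 2 * y * z) / (((y+z)/x) ^ 2 * y * z) =
    (x ^ 4 + k₃ * x ^ 2 * y + k₂ * x ^ 2 * z + y ^ 2 + z ^ 2 + 2 * y * z)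
      / (x ^ 2 * y * z) := by
  rw [div_eq_div_iff (by simp [div_ne_zero, hx, hy, hz, hyz, pow_ne_zero])
    (by simp [hx, hy, hz, pow_ne_zero])]
  field_simp
  ring

lemma gen_id2 {K : Type*} [Field K] (k₂ k₃ x y z : K)
    (hx : x ≠ 0) (hy : y ≠ 0) (hz : z ≠ 0)
    (hA : x ^ 4 + k₂ * x ^ 2 * z + z ^ 2 ≠ 0) :
    (x ^ 4 + k₃ * x ^ 2 * ((x ^ 4 + k₂ * x ^ 2 * z + z ^ 2)/y)
      + k₂ * x ^ 2 * z + ((x ^ 4 + k₂ * x ^ 2 * z + z ^ 2)/y) ^ 2 + z ^ 2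
      + 2 * ((x ^ 4 + k₂ * x ^ 2 * z + z ^ 2)/y) * z)
      / (x ^ 2 * ((x ^ 4 + k₂ * x ^ 2 * z + z ^ 2)/y) * z) =
    (x ^ 4 + k₃ * x ^ 2 * y + k₂ * x ^ 2 * z + y ^ 2 + z ^ 2 + 2 * y * z)
      / (x ^ 2 * y * z) := by
  rw [div_eq_div_iff (mul_ne_zero (mul_ne_zero (pow_ne_zero _ hx) (div_ne_zero hA hy)) hz)
    (by simp [hx, hy, hz, pow_ne_zero])]
  field_simp
  ring

lemma gen_id3 {K : Type*} [Field K] (k₂ k₃ x y z : K)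
    (hx : x ≠ 0) (hy : y ≠ 0) (hz : z ≠ 0)
    (hB : x ^ 4 + k₃ * x ^ 2 * y + y ^ 2 ≠ 0) :
    (x ^ 4 + k₃ * x ^ 2 * y
      + k₂ * x ^ 2 * ((x ^ 4 + k₃ * x ^ 2 * y + y ^ 2)/z) + y ^ 2
      + ((x ^ 4 + k₃ * x ^ 2 * y + y ^ 2)/z) ^ 2
      + 2 * y * ((x ^ 4 + k₃ * x ^ 2 * y + y ^ 2)/z))
      / (x ^ 2 * y * ((x ^ 4 + k₃ * x ^ 2 * y + y ^ 2)/z)) =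
    (x ^ 4 + k₃ * x ^ 2 * y + k₂ * x ^ 2 * z + y ^ 2 + z ^ 2 + 2 * y * z)
      / (x ^ 2 * y * z) := by
  rw [div_eq_div_iff (mul_ne_zero (mul_ne_zero (pow_ne_zero _ hx) hy) (div_ne_zero hB hz))
    (by simp [hx, hy, hz, pow_ne_zero])]
  field_simp
  ring

/-- The Laurent polynomial
`F(x,y,z) = (x⁴ + k₃x²y + k₂x²z + y² + z² + 2yz)/(x²yz)` is invariant under the three
mutation maps `μ₁(x,y,z) = ((y+z)/x, y, z)`,
`μ₂(x,y,z) = (x, (x⁴+k₂x²z+z²)/y, z)`, `μ₃(x,y,z) = (x, y, (x⁴+k₃x²y+y²)/z)`,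
as identities of rational functions in `x, y, z` over `ℚ(k₂, k₃)`. -/
theorem stmt_17 :
    F₃₁₀ (rfVar 3) (rfVar 4) ((rfVar 1 + rfVar 2) / rfVar 0) (rfVar 1) (rfVar 2) =
        F₃₁₀ (rfVar 3) (rfVar 4) (rfVar 0) (rfVar 1) (rfVar 2) ∧
      F₃₁₀ (rfVar 3) (rfVar 4) (rfVar 0)
          ((rfVar 0 ^ 4 + rfVar 3 * rfVar 0 ^ 2 * rfVar 2 + rfVar 2 ^ 2) / rfVar 1)
          (rfVar 2) =
        F₃₁₀ (rfVar 3) (rfVar 4) (rfVar 0) (rfVar 1) (rfVar 2) ∧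
      F₃₁₀ (rfVar 3) (rfVar 4) (rfVar 0) (rfVar 1)
          ((rfVar 0 ^ 4 + rfVar 4 * rfVar 0 ^ 2 * rfVar 1 + rfVar 1 ^ 2) / rfVar 2) =
        F₃₁₀ (rfVar 3) (rfVar 4) (rfVar 0) (rfVar 1) (rfVar 2) := by
  have hv : ∀ i : Fin 5, rfVar i ≠ 0 := fun i =>
    alg_ne_zero (MvPolynomial.X_ne_zero i)
  have h0 := hv 0
  have h1 := hv 1
  have h2 := hv 2
  have hyz : rfVar 1 + rfVar 2 ≠ 0 := by
    have : rfVar 1 + rfVar 2 = algebraMap (MvPolynomial (Fin 5) ℚ)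
        (FractionRing (MvPolynomial (Fin 5) ℚ))
        (MvPolynomial.X 1 + MvPolynomial.X 2) := by
      simp [rfVar, map_add]
    rw [this]
    exact alg_ne_zero (poly_ne_zero_of_eval (fun _ => 1) (by simp))
  have hA : rfVar 0 ^ 4 + rfVar 3 * rfVar 0 ^ 2 * rfVar 2 + rfVar 2 ^ 2 ≠ 0 := by
    have : rfVar 0 ^ 4 + rfVar 3 * rfVar 0 ^ 2 * rfVar 2 + rfVar 2 ^ 2 =
        algebraMap (MvPolynomial (Fin 5) ℚ) (FractionRing (MvPolynomial (Fin 5) ℚ))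
          (MvPolynomial.X 0 ^ 4 + MvPolynomial.X 3 * MvPolynomial.X 0 ^ 2 *
            MvPolynomial.X 2 + MvPolynomial.X 2 ^ 2) := by
      simp [rfVar, map_add, map_mul, map_pow]
    rw [this]
    exact alg_ne_zero (poly_ne_zero_of_eval (fun i => if i = 0 then 1 else 0) (by simp))
  have hB : rfVar 0 ^ 4 + rfVar 4 * rfVar 0 ^ 2 * rfVar 1 + rfVar 1 ^ 2 ≠ 0 := by
    have : rfVar 0 ^ 4 + rfVar 4 * rfVar 0 ^ 2 * rfVar 1 + rfVar 1 ^ 2 =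
        algebraMap (MvPolynomial (Fin 5) ℚ) (FractionRing (MvPolynomial (Fin 5) ℚ))
          (MvPolynomial.X 0 ^ 4 + MvPolynomial.X 4 * MvPolynomial.X 0 ^ 2 *
            MvPolynomial.X 1 + MvPolynomial.X 1 ^ 2) := by
      simp [rfVar, map_add, map_mul, map_pow]
    rw [this]
    exact alg_ne_zero (poly_ne_zero_of_eval (fun i => if i = 0 then 1 else 0) (by simp))
  refine ⟨?_, ?_, ?_⟩
  · exact gen_id1 (rfVar 3) (rfVar 4) (rfVar 0) (rfVar 1) (rfVar 2) h0 h1 h2 hyz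
  · exact gen_id2 (rfVar 3) (rfVar 4) (rfVar 0) (rfVar 1) (rfVar 2) h0 h1 h2 hA
  · exact gen_id3 (rfVar 3) (rfVar 4) (rfVar 0) (rfVar 1) (rfVar 2) h0 h1 h2 hB
end

section
/- Let k₁, k₂, k₃ ≥ 0 be integers. The Laurent polynomial F(x,y,z) = (x² + y² + z² + k₁yz + k₂zx + k₃xy)/(xyz) is invariant under the three maps μ₁(x,y,z) = ((y² + k₁yz + z²)/x, y, z), μ₂(x,y,z) = (x, (x² + k₂xz + z²)/y, z), μ₃(x,y,z) = (x, y, (x² + k₃xy + y²)/z), as identities of rational functions over ℚ. Consequently, if (a,b,c) is a positive rational solution of F(x,y,z) = 3 + k₁ + k₂ + k₃ then so is each μᵢ(a,b,c). -/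
/-- The generalized Markov Laurent polynomial
`F(x,y,z) = (x² + y² + z² + k₁yz + k₂zx + k₃xy)/(xyz)` over any field. -/
noncomputable def genMarkovF {K : Type*} [Field K] (k₁ k₂ k₃ : ℕ) (x y z : K) : K :=
  (x ^ 2 + y ^ 2 + z ^ 2 + (k₁ : K) * y * z + (k₂ : K) * z * x + (k₃ : K) * x * y) /
    (x * y * z)

/-- The generators `x, y, z` of the field of rational functions `ℚ(x, y, z)`. -/
noncomputable def rv (i : Fin 3) : FractionRing (MvPolynomial (Fin 3) ℚ) :=
  algebraMap (MvPolynomial (Fin 3) ℚ) (FractionRing (MvPolynomial (Fin 3) ℚ))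
    (MvPolynomial.X i)

lemma mu1 {K : Type*} [Field K] (k₁ k₂ k₃ : ℕ) (x y z : K)
    (hx : x ≠ 0) (hy : y ≠ 0) (hz : z ≠ 0)
    (hs : y ^ 2 + (k₁ : K) * y * z + z ^ 2 ≠ 0) :
    genMarkovF k₁ k₂ k₃ ((y ^ 2 + (k₁ : K) * y * z + z ^ 2) / x) y z =
      genMarkovF k₁ k₂ k₃ x y z := by
  set s := y ^ 2 + (k₁ : K) * y * z + z ^ 2 with hdef
  unfold genMarkovF
  rw [div_eq_div_iff (by simp [div_ne_zero hs hx, hy, hz]) (by simp [hx, hy, hz])]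
  field_simp
  rw [hdef]
  ring

lemma mu2 {K : Type*} [Field K] (k₁ k₂ k₃ : ℕ) (x y z : K)
    (hx : x ≠ 0) (hy : y ≠ 0) (hz : z ≠ 0)
    (hs : x ^ 2 + (k₂ : K) * x * z + z ^ 2 ≠ 0) :
    genMarkovF k₁ k₂ k₃ x ((x ^ 2 + (k₂ : K) * x * z + z ^ 2) / y) z =
      genMarkovF k₁ k₂ k₃ x y z := by
  set s := x ^ 2 + (k₂ : K) * x * z + z ^ 2 with hdef
  unfold genMarkovF
  rw [div_eq_div_iff (by simp [div_ne_zero hs hy, hx, hz]) (by simp [hx, hy, hz])]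
  field_simp
  rw [hdef]
  ring

lemma mu3 {K : Type*} [Field K] (k₁ k₂ k₃ : ℕ) (x y z : K)
    (hx : x ≠ 0) (hy : y ≠ 0) (hz : z ≠ 0)
    (hs : x ^ 2 + (k₃ : K) * x * y + y ^ 2 ≠ 0) :
    genMarkovF k₁ k₂ k₃ x y ((x ^ 2 + (k₃ : K) * x * y + y ^ 2) / z) =
      genMarkovF k₁ k₂ k₃ x y z := by
  set s := x ^ 2 + (k₃ : K) * x * y + y ^ 2 with hdef
  unfold genMarkovF
  rw [div_eq_div_iff (by simp [div_ne_zero hs hz, hx, hy]) (by simp [hx, hy, hz])]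
  field_simp
  rw [hdef]
  ring

lemma rv_ne_zero (i : Fin 3) : rv i ≠ 0 := by
  simp [rv, IsFractionRing.to_map_eq_zero_iff, MvPolynomial.X_ne_zero]

lemma sum_ne_zero (k : ℕ) (i j : Fin 3) :
    rv i ^ 2 + (k : FractionRing (MvPolynomial (Fin 3) ℚ)) * rv i * rv j + rv j ^ 2 ≠ 0 := by
  have h : rv i ^ 2 + (k : FractionRing (MvPolynomial (Fin 3) ℚ)) * rv i * rv j + rv j ^ 2 =
      algebraMap (MvPolynomial (Fin 3) ℚ) (FractionRing (MvPolynomial (Fin 3) ℚ))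
        (MvPolynomial.X i ^ 2 + (k : MvPolynomial (Fin 3) ℚ) * MvPolynomial.X i *
          MvPolynomial.X j + MvPolynomial.X j ^ 2) := by
    simp [rv, map_add, map_mul, map_pow]
  rw [h, Ne, IsFractionRing.to_map_eq_zero_iff]
  intro hz
  have := congrArg (MvPolynomial.eval (fun _ => (1 : ℚ))) hz
  simp at this
  have hk : (0 : ℚ) ≤ (k : ℚ) := by positivity
  linarith

/-- For integers `k₁, k₂, k₃ ≥ 0`, the Laurent polynomial
`F(x,y,z) = (x² + y² + z² + k₁yz + k₂zx + k₃xy)/(xyz)` is invariant under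
`μ₁(x,y,z) = ((y²+k₁yz+z²)/x, y, z)`, `μ₂(x,y,z) = (x, (x²+k₂xz+z²)/y, z)`,
`μ₃(x,y,z) = (x, y, (x²+k₃xy+y²)/z)` as identities of rational functions over `ℚ`;
consequently, if `(a,b,c)` is a positive rational solution of
`F(x,y,z) = 3 + k₁ + k₂ + k₃` then so is each `μᵢ(a,b,c)`. -/
theorem stmt_19 (k₁ k₂ k₃ : ℕ) :
    (genMarkovF k₁ k₂ k₃ ((rv 1 ^ 2 + (k₁ : FractionRing (MvPolynomial (Fin 3) ℚ)) *
          rv 1 * rv 2 + rv 2 ^ 2) / rv 0) (rv 1) (rv 2) =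
        genMarkovF k₁ k₂ k₃ (rv 0) (rv 1) (rv 2) ∧
      genMarkovF k₁ k₂ k₃ (rv 0) ((rv 0 ^ 2 + (k₂ : FractionRing (MvPolynomial (Fin 3) ℚ)) *
          rv 0 * rv 2 + rv 2 ^ 2) / rv 1) (rv 2) =
        genMarkovF k₁ k₂ k₃ (rv 0) (rv 1) (rv 2) ∧
      genMarkovF k₁ k₂ k₃ (rv 0) (rv 1) ((rv 0 ^ 2 +
          (k₃ : FractionRing (MvPolynomial (Fin 3) ℚ)) * rv 0 * rv 1 + rv 1 ^ 2) / rv 2) =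
        genMarkovF k₁ k₂ k₃ (rv 0) (rv 1) (rv 2)) ∧
    (∀ a b c : ℚ, 0 < a → 0 < b → 0 < c →
      genMarkovF k₁ k₂ k₃ a b c = 3 + k₁ + k₂ + k₃ →
      (0 < (b ^ 2 + (k₁ : ℚ) * b * c + c ^ 2) / a ∧
        genMarkovF k₁ k₂ k₃ ((b ^ 2 + (k₁ : ℚ) * b * c + c ^ 2) / a) b c =
          3 + k₁ + k₂ + k₃) ∧
      (0 < (a ^ 2 + (k₂ : ℚ) * a * c + c ^ 2) / b ∧
        genMarkovF k₁ k₂ k₃ a ((a ^ 2 + (k₂ : ℚ) * a * c + c ^ 2) / b) c =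
          3 + k₁ + k₂ + k₃) ∧
      (0 < (a ^ 2 + (k₃ : ℚ) * a * b + b ^ 2) / c ∧
        genMarkovF k₁ k₂ k₃ a b ((a ^ 2 + (k₃ : ℚ) * a * b + b ^ 2) / c) =
          3 + k₁ + k₂ + k₃)) := by
  refine ⟨⟨mu1 k₁ k₂ k₃ _ _ _ (rv_ne_zero 0) (rv_ne_zero 1) (rv_ne_zero 2) (sum_ne_zero k₁ 1 2),
    mu2 k₁ k₂ k₃ _ _ _ (rv_ne_zero 0) (rv_ne_zero 1) (rv_ne_zero 2) (sum_ne_zero k₂ 0 2),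
    mu3 k₁ k₂ k₃ _ _ _ (rv_ne_zero 0) (rv_ne_zero 1) (rv_ne_zero 2) (sum_ne_zero k₃ 0 1)⟩, ?_⟩
  intro a b c ha hb hc hF
  have h1 : (0 : ℚ) < b ^ 2 + (k₁ : ℚ) * b * c + c ^ 2 := by positivity
  have h2 : (0 : ℚ) < a ^ 2 + (k₂ : ℚ) * a * c + c ^ 2 := by positivity
  have h3 : (0 : ℚ) < a ^ 2 + (k₃ : ℚ) * a * b + b ^ 2 := by positivity
  exact ⟨⟨div_pos h1 ha,
      by rw [mu1 k₁ k₂ k₃ a b c ha.ne' hb.ne' hc.ne' h1.ne']; exact hF⟩,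
    ⟨div_pos h2 hb,
      by rw [mu2 k₁ k₂ k₃ a b c ha.ne' hb.ne' hc.ne' h2.ne']; exact hF⟩,
    ⟨div_pos h3 hc,
      by rw [mu3 k₁ k₂ k₃ a b c ha.ne' hb.ne' hc.ne' h3.ne']; exact hF⟩⟩
end
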